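/- arXiv:2010.15522 — 8 statements merged into one kernel-verified Lean document; each statement's English description precedes it below -/
import Mathlib

section
/- For all integers a ≥ 0 and b, c, d ≥ 1, and real numbers x ≥ 1 + b (so x ≥ 2) and y ≥ 2, the expression c(c−1)(xy−1)(x+a−1) + a((a−1)(xy−1) + bxy)(c+y−1) + cyx((x−1)d − b) + yad(x(c−1)+1) + bxc is strictly positive. -/
/-- For all integers `a ≥ 0` and `b, c, d ≥ 1`, and reals `x ≥ 1 + b` and `y ≥ 2`,
the expression
`c(c−1)(xy−1)(x+a−1) + a((a−1)(xy−1) + bxy)(c+y−1) + cyx((x−1)d − b) + yad(x(c−1)+1) + bxc`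
is strictly positive. -/
theorem stmt2 (a b c d : ℕ) (hb : 1 ≤ b) (hc : 1 ≤ c) (hd : 1 ≤ d)
    (x y : ℝ) (hx : 1 + (b : ℝ) ≤ x) (hy : 2 ≤ y) :
    0 < (c : ℝ) * ((c : ℝ) - 1) * (x * y - 1) * (x + (a : ℝ) - 1)
      + (a : ℝ) * (((a : ℝ) - 1) * (x * y - 1) + (b : ℝ) * x * y) * ((c : ℝ) + y - 1)
      + (c : ℝ) * y * x * ((x - 1) * (d : ℝ) - (b : ℝ))
      + y * (a : ℝ) * (d : ℝ) * (x * ((c : ℝ) - 1) + 1)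
      + (b : ℝ) * x * (c : ℝ) := by
  have ha : (0:ℝ) ≤ a := Nat.cast_nonneg a
  have hb' : (1:ℝ) ≤ b := by exact_mod_cast hb
  have hc' : (1:ℝ) ≤ c := by exact_mod_cast hc
  have hd' : (1:ℝ) ≤ d := by exact_mod_cast hd
  have hx2 : (2:ℝ) ≤ x := by linarith
  have hxy : (1:ℝ) < x * y := by nlinarith
  have t1 : 0 ≤ (c : ℝ) * ((c : ℝ) - 1) * (x * y - 1) * (x + (a : ℝ) - 1) := by
    apply mul_nonneg; apply mul_nonneg; apply mul_nonneg <;> linarith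
    all_goals linarith
  have inner : (0:ℝ) < ((a : ℝ) - 1) * (x * y - 1) + (b : ℝ) * x * y := by nlinarith
  have t2 : 0 ≤ (a : ℝ) * (((a : ℝ) - 1) * (x * y - 1) + (b : ℝ) * x * y) * ((c : ℝ) + y - 1) := by
    apply mul_nonneg; apply mul_nonneg <;> linarith
    linarith
  have h3 : (0:ℝ) ≤ (x - 1) * (d : ℝ) - (b : ℝ) := by
    nlinarith [mul_le_mul_of_nonneg_right (show (b:ℝ) ≤ x - 1 by linarith) (show (0:ℝ) ≤ d by linarith), mul_le_mul_of_nonneg_left hd' (show (0:ℝ) ≤ (b:ℝ) by linarith)]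
  have t3 : 0 ≤ (c : ℝ) * y * x * ((x - 1) * (d : ℝ) - (b : ℝ)) := by
    apply mul_nonneg _ h3; apply mul_nonneg; apply mul_nonneg <;> linarith
    linarith
  have h4 : (0:ℝ) ≤ x * ((c : ℝ) - 1) + 1 := by
    nlinarith [mul_nonneg (show (0:ℝ) ≤ x by linarith) (show (0:ℝ) ≤ (c:ℝ) - 1 by linarith)]
  have t4 : 0 ≤ y * (a : ℝ) * (d : ℝ) * (x * ((c : ℝ) - 1) + 1) := by
    apply mul_nonneg _ h4; apply mul_nonneg; apply mul_nonneg <;> linarith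
    linarith
  have t5 : 0 < (b : ℝ) * x * (c : ℝ) := by positivity
  linarith
end

section
/- For the broom with path of length a and b leaves rooted at the far end r of the path (n = a + b + 1 vertices), the total number of vertices over all subtrees containing r equals (a^2 + a)/2 + (a + 1 + b/2)·2^b, and hence the local mean subtree order at r equals n − (1/2)(b + a·n/(a + 2^b)). -/
open scoped Classical

/-- The subtrees (nonempty connected induced subgraphs) of a graph, as vertex sets. -/
noncomputable def subtrees {V : Type*} [Fintype V] (G : SimpleGraph V) :
    Finset (Finset V) :=
  Finset.univ.filter (fun s => s.Nonempty ∧ (G.induce (s : Set V)).Connected)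

/-- The subtrees of a graph containing a fixed vertex `r`. -/
noncomputable def subtreesThrough {V : Type*} [Fintype V] (G : SimpleGraph V) (r : V) :
    Finset (Finset V) :=
  Finset.univ.filter (fun s => r ∈ s ∧ (G.induce (s : Set V)).Connected)

/-- The broom with a handle of length `a` and `b` leaves: vertices `0,…,a` form a path
and vertices `a+1,…,a+b` are leaves attached to vertex `a`. The root is vertex `0`. -/
def broom (a b : ℕ) : SimpleGraph (Fin (a + b + 1)) :=
  SimpleGraph.fromRel (fun i j =>
    (i.val + 1 = j.val ∧ j.val ≤ a) ∨ (i.val = a ∧ a < j.val))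

/-!
A connected vertex set through the root of a broom is closed downward along the handle, so it
is either an initial segment `{0, …, i}` of the handle with `i < a`, or the whole handle
together with an arbitrary set of leaves. Closure follows from a discrete intermediate value
argument for the distance from the root along a walk from the root; conversely every vertex of such a set is
joined to the root by going back along the handle. Counting, there are `a + 2^b` such sets, of
total order `∑_{i<a} (i+1) + ∑_{T} (a+1+|T|) = (a²+a)/2 + (a+1)·2^b + b·2^(b-1)`.
-/

open Finset

namespace SimpleGraph

variable {V : Type*} {G : SimpleGraph V}

theorem Walk.exists_mem_support_eq_of_adj_le_succ (f : V → ℕ)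
    (hf : ∀ u v, G.Adj u v → f v ≤ f u + 1) {x y : V} (w : G.Walk x y) {j : ℕ}
    (hxj : f x ≤ j) (hjy : j ≤ f y) : ∃ z ∈ w.support, f z = j := by
  induction w with
  | nil => exact ⟨_, List.mem_singleton_self _, by omega⟩
  | @cons u v y huv p ih =>
    by_cases hu : f u = j
    · exact ⟨u, List.mem_cons_self, hu⟩
    · obtain ⟨z, hz, hzj⟩ := ih (by have := hf u v huv; omega) hjy
      exact ⟨z, List.mem_cons_of_mem _ hz, hzj⟩

theorem induce_connected_of_exists_adj_lt {s : Set V} {r : V} (hr : r ∈ s) (μ : V → ℕ)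
    (h : ∀ v ∈ s, v ≠ r → ∃ u ∈ s, G.Adj u v ∧ μ u < μ v) :
    (G.induce s).Connected := by
  have reach : ∀ v (hv : v ∈ s), (G.induce s).Reachable ⟨r, hr⟩ ⟨v, hv⟩ := by
    intro v
    induction hμ : μ v using Nat.strong_induction_on generalizing v with
    | _ k ih =>
      intro hv
      by_cases hvr : v = r
      · subst hvr; rfl
      obtain ⟨u, hu, huv, hlt⟩ := h v hv hvr
      exact (ih (μ u) (hμ ▸ hlt) u rfl hu).trans (Adj.reachable (G := G.induce s) huv)
  have : Nonempty s := ⟨⟨r, hr⟩⟩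
  exact ⟨fun x y => (reach x x.2).symm.trans (reach y y.2)⟩

end SimpleGraph

theorem Finset.sum_card_powerset_mul_two {α : Type*} (s : Finset α) :
    (∑ t ∈ s.powerset, #t) * 2 = #s * 2 ^ #s := by
  rw [Finset.sum_powerset_apply_card (fun k => k)]
  simp only [smul_eq_mul, mul_comm (Nat.choose _ _)]
  rw [Nat.sum_range_mul_choose]
  rcases Nat.eq_zero_or_pos #s with h | h
  · simp [h]
  · rw [mul_assoc, ← pow_succ, Nat.sub_add_cancel h]

namespace Broom

variable {a b : ℕ}

abbrev root (a b : ℕ) : Fin (a + b + 1) := ⟨0, Nat.succ_pos _⟩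

/-- The distance from the root. -/
def depth (a : ℕ) {b : ℕ} (v : Fin (a + b + 1)) : ℕ := min v.val (a + 1)

theorem depth_le_succ_of_adj {u v : Fin (a + b + 1)} (h : (broom a b).Adj u v) :
    depth a v ≤ depth a u + 1 := by
  simp only [broom, SimpleGraph.fromRel_adj] at h
  unfold depth
  omega

theorem mem_subtreesThrough_iff {s : Finset (Fin (a + b + 1))} :
    s ∈ subtreesThrough (broom a b) (root a b) ↔
      root a b ∈ s ∧
        ∀ v ∈ s, ∀ z : Fin (a + b + 1), z.val ≤ min v.val a → z ∈ s := by
  simp only [subtreesThrough, mem_filter, mem_univ, true_and, and_congr_right_iff]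
  intro hr
  constructor
  · intro hc v hv z hz
    obtain ⟨w⟩ := hc.preconnected ⟨root a b, hr⟩ ⟨v, hv⟩
    let w' : (broom a b).Walk (root a b) v := w.map (SimpleGraph.Embedding.induce _).toHom
    obtain ⟨z', hz', hdepth⟩ := w'.exists_mem_support_eq_of_adj_le_succ (depth a)
      (fun _ _ => depth_le_succ_of_adj) (j := z.val) (by simp [depth]) (by simp only [depth]; omega)
    rw [show w'.support = _ from SimpleGraph.Walk.support_map _ _, List.mem_map] at hz'
    obtain ⟨⟨y, hy⟩, -, rfl⟩ := hz'
    have : y = z := Fin.ext (by change min y.val (a + 1) = z.val at hdepth; omega)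
    exact this ▸ hy
  · intro hcl
    refine SimpleGraph.induce_connected_of_exists_adj_lt hr Fin.val fun v hv hvr => ?_
    have hv0 : v.val ≠ 0 := fun h => hvr (Fin.ext h)
    -- `p` is the parent of `v`: the next vertex on the way back to the root
    obtain ⟨p, hpv, hp⟩ :
        ∃ p < v.val, (p + 1 = v.val ∧ v.val ≤ a) ∨ (p = a ∧ a < v.val) :=
      if hva : v.val ≤ a then ⟨v.val - 1, by omega, by omega⟩ else ⟨a, by omega, by omega⟩
    refine ⟨⟨p, by omega⟩, hcl v hv _ (by simp; omega), ?_, hpv⟩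
    simp only [broom, SimpleGraph.fromRel_adj]
    exact ⟨Fin.ne_of_val_ne (by simp; omega), Or.inl hp⟩

def pathSeg (a b i : ℕ) : Finset (Fin (a + b + 1)) := univ.filter (·.val ≤ i)

def leaves (a b : ℕ) : Finset (Fin (a + b + 1)) := univ.filter (a < ·.val)

theorem card_pathSeg {i : ℕ} (h : i ≤ a) : #(pathSeg a b i) = i + 1 := by
  rw [show pathSeg a b i = Iic ⟨i, by omega⟩ by ext; simp [pathSeg, Fin.le_def], Fin.card_Iic]

theorem card_leaves : #(leaves a b) = b := by
  rw [show leaves a b = (pathSeg a b a)ᶜ by ext; simp [pathSeg, leaves], card_compl,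
    card_pathSeg le_rfl, Fintype.card_fin]
  omega

theorem disjoint_pathSeg_of_subset_leaves {T : Finset (Fin (a + b + 1))} (hT : T ⊆ leaves a b) :
    Disjoint (pathSeg a b a) T :=
  disjoint_left.2 fun v hv hvT => by
    have := (mem_filter.1 (hT hvT)).2
    simp only [pathSeg, mem_filter] at hv
    omega

theorem card_pathSeg_union {T : Finset (Fin (a + b + 1))} (hT : T ⊆ leaves a b) :
    #(pathSeg a b a ∪ T) = a + 1 + #T := by
  rw [card_union_of_disjoint (disjoint_pathSeg_of_subset_leaves hT), card_pathSeg le_rfl]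

theorem subtreesThrough_eq :
    subtreesThrough (broom a b) (root a b) =
      (range a).image (pathSeg a b) ∪ (leaves a b).powerset.image (pathSeg a b a ∪ ·) := by
  ext s
  simp only [mem_subtreesThrough_iff, mem_union, mem_image, mem_range, mem_powerset]
  constructor
  · rintro ⟨hr, hcl⟩
    by_cases ha : (⟨a, by omega⟩ : Fin (a + b + 1)) ∈ s
    · refine Or.inr ⟨s.filter (a < ·.val), fun v hv => by simp_all [leaves], ?_⟩
      ext v
      simp only [pathSeg, mem_union, mem_filter, mem_univ, true_and]
      constructor
      · rintro (hv | hv)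
        · exact hcl _ ha v (by simpa using hv)
        · exact hv.1
      · intro hv
        by_cases hva : v.val ≤ a
        · exact Or.inl hva
        · exact Or.inr ⟨hv, by omega⟩
    · obtain ⟨w, hw, hmax⟩ := s.exists_max_image Fin.val ⟨_, hr⟩
      have hlt : ∀ v ∈ s, v.val < a := fun v hv => by
        by_contra h
        exact ha (hcl v hv _ (by simp; omega))
      refine Or.inl ⟨w.val, hlt w hw, ?_⟩
      ext v
      simp only [pathSeg, mem_filter, mem_univ, true_and]
      exact ⟨fun hv => hcl w hw v (by have := hlt w hw; omega), hmax v⟩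
  · rintro (⟨i, hi, rfl⟩ | ⟨T, hT, rfl⟩)
    · refine ⟨by simp [pathSeg], fun v hv z hz => ?_⟩
      simp only [pathSeg, mem_filter, mem_univ, true_and] at hv ⊢
      omega
    · refine ⟨by simp [pathSeg], fun v _ z hz => mem_union_left _ ?_⟩
      simp only [pathSeg, mem_filter, mem_univ, true_and]
      omega

theorem disjoint_pathSegs_pathSegUnions :
    Disjoint ((range a).image (pathSeg a b))
      ((leaves a b).powerset.image (pathSeg a b a ∪ ·)) := by
  simp only [disjoint_left, mem_image, mem_range, mem_powerset, not_exists, not_and]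
  rintro _ ⟨i, hi, rfl⟩ T hT h
  have := congrArg card h
  rw [card_pathSeg_union hT, card_pathSeg hi.le] at this
  omega

theorem injOn_pathSeg : Set.InjOn (pathSeg a b) (range a) := fun i hi j hj h => by
  simpa [card_pathSeg (mem_range.1 hi).le, card_pathSeg (mem_range.1 hj).le] using
    congrArg card h

theorem injOn_pathSeg_union : Set.InjOn (pathSeg a b a ∪ ·) (leaves a b).powerset :=
  fun T hT T' hT' h => by
    rw [← union_sdiff_cancel_left (disjoint_pathSeg_of_subset_leaves (mem_powerset.1 hT)),
      ← union_sdiff_cancel_left (disjoint_pathSeg_of_subset_leaves (mem_powerset.1 hT'))]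
    exact congrArg (· \ pathSeg a b a) h

theorem card_subtreesThrough : #(subtreesThrough (broom a b) (root a b)) = a + 2 ^ b := by
  rw [subtreesThrough_eq, card_union_of_disjoint disjoint_pathSegs_pathSegUnions,
    card_image_of_injOn injOn_pathSeg, card_image_of_injOn injOn_pathSeg_union, card_range,
    card_powerset, card_leaves]

theorem sum_card_subtreesThrough_mul_two :
    (∑ s ∈ subtreesThrough (broom a b) (root a b), #s) * 2 =
      a * (a + 1) + (2 * (a + 1) + b) * 2 ^ b := by
  have path_part : (∑ i ∈ range a, (i + 1)) * 2 = a * (a + 1) := by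
    have gauss := sum_range_id_mul_two (a + 1)
    rwa [sum_range_succ', add_zero, add_tsub_cancel_right, mul_comm (a + 1)] at gauss
  have leaf_part :
      (∑ T ∈ (leaves a b).powerset, (a + 1 + #T)) * 2 = (2 * (a + 1) + b) * 2 ^ b := by
    rw [sum_add_distrib, add_mul, sum_card_powerset_mul_two, sum_const, card_powerset, card_leaves,
      smul_eq_mul]
    ring
  rw [subtreesThrough_eq, sum_union disjoint_pathSegs_pathSegUnions, sum_image injOn_pathSeg,
    sum_image injOn_pathSeg_union,
    sum_congr rfl fun i hi => card_pathSeg (b := b) (mem_range.1 hi).le,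
    sum_congr rfl fun T hT => card_pathSeg_union (mem_powerset.1 hT), add_mul, path_part, leaf_part]

end Broom

/-- For the broom with path of length `a` and `b` leaves rooted at the far end `r`,
the total order of all subtrees containing `r` equals `(a²+a)/2 + (a+1+b/2)·2^b`, and
the local mean subtree order at `r` equals `n − (1/2)(b + a·n/(a + 2^b))`. -/
theorem stmt4 (a b n : ℕ) (hn : n = a + b + 1) :
    (∑ s ∈ subtreesThrough (broom a b) ⟨0, Nat.succ_pos _⟩, (s.card : ℝ)) =
        ((a : ℝ) ^ 2 + a) / 2 + ((a : ℝ) + 1 + (b : ℝ) / 2) * 2 ^ b ∧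
    (∑ s ∈ subtreesThrough (broom a b) ⟨0, Nat.succ_pos _⟩, (s.card : ℝ)) /
        (subtreesThrough (broom a b) ⟨0, Nat.succ_pos _⟩).card =
      (n : ℝ) - (1 / 2) * ((b : ℝ) + (a : ℝ) * n / ((a : ℝ) + 2 ^ b)) := by
  have total : (∑ s ∈ subtreesThrough (broom a b) (Broom.root a b), (#s : ℝ)) =
      ((a : ℝ) ^ 2 + a) / 2 + ((a : ℝ) + 1 + (b : ℝ) / 2) * 2 ^ b := by
    have h : (∑ s ∈ subtreesThrough (broom a b) (Broom.root a b), (#s : ℝ)) * 2 =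
        a * (a + 1) + (2 * (a + 1) + b) * 2 ^ b := by
      exact_mod_cast Broom.sum_card_subtreesThrough_mul_two
    linarith
  have count : (#(subtreesThrough (broom a b) (Broom.root a b)) : ℝ) = a + 2 ^ b := by
    exact_mod_cast Broom.card_subtreesThrough
  refine ⟨total, ?_⟩
  rw [total, count, hn]
  field_simp
  push_cast
  ring
end

section
/- For every finite rooted tree T, the defect Δ(T) := |T| − t(T)/s(T) satisfies Δ(T) ≥ (1/2)·log₂ s(T), where s(T) is the number of subtrees (connected induced subgraphs) of T containing the root and t(T) is the total number of vertices over all such subtrees. -/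
open scoped Classical

/-!
Orient the tree towards the root `r`. Root-containing subtrees are then `insert r S` for the
ancestor-closed sets `S` of the forest `T - r`, so it suffices to bound the defect of the family
of ancestor-closed subsets of a forest, by induction. Over a disjoint union of forests this family
is a product, so both `log₂` of its size and its defect are additive. Putting a new root `r` on a
forest whose family has `b` members gives `1 + b` members and raises the defect by at least
`1 / (1 + b)`; this suffices because `log₂ (1 + b) - log₂ b ≤ 2 / (1 + b)` for `b ≥ 1`, which
is the chord bound for the convex function `x ↦ x log x` on `[1, 2]`.
-/

open Finset FinsetFamily Real

lemma one_add_mul_log_one_add_le {t : ℝ} (h0 : 0 ≤ t) (h1 : t ≤ 1) :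
    (1 + t) * log (1 + t) ≤ 2 * log 2 * t := by
  have chord := strictConvexOn_mul_log.convexOn.2 (Set.mem_Ici.2 zero_le_one)
    (Set.mem_Ici.2 zero_le_two) (sub_nonneg.2 h1) h0 (sub_add_cancel 1 t)
  simp only [smul_eq_mul, log_one, mul_zero, mul_one] at chord
  have h : (1 - t) + t * 2 = 1 + t := by ring
  rw [h] at chord
  linarith

lemma logb_one_add_le {b : ℝ} (hb : 1 ≤ b) :
    logb 2 (1 + b) ≤ logb 2 b + 2 / (1 + b) := by
  have hb0 : 0 < b := by linarith
  have hlog : (1 + b) * log (1 + 1 / b) ≤ 2 * log 2 := by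
    have h := one_add_mul_log_one_add_le (t := 1 / b) (by positivity)
      ((div_le_one hb0).2 hb)
    calc (1 + b) * log (1 + 1 / b) = b * ((1 + 1 / b) * log (1 + 1 / b)) := by
          field_simp; ring
      _ ≤ b * (2 * log 2 * (1 / b)) := mul_le_mul_of_nonneg_left h hb0.le
      _ = 2 * log 2 := by field_simp
  have hquot : (1 + b) / b = 1 + 1 / b := by rw [add_div, div_self hb0.ne', add_comm]
  rw [← sub_le_iff_le_add', ← logb_div (by positivity) hb0.ne', hquot, logb,
    div_le_iff₀ (log_pos one_lt_two), div_mul_eq_mul_div, le_div_iff₀ (by positivity)]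
  linarith

section Defect

variable {V : Type*}

noncomputable def defect (U : Finset V) (𝓕 : Finset (Finset V)) : ℝ :=
  U.card - (∑ S ∈ 𝓕, (S.card : ℝ)) / 𝓕.card

noncomputable def cone (r : V) (𝓕 : Finset (Finset V)) : Finset (Finset V) :=
  insert ∅ (𝓕.image (insert r))

variable {U W : Finset V} {𝓐 𝓑 𝓕 : Finset (Finset V)} {r : V}

lemma injOn_sup_of_disjoint (hUW : Disjoint U W) (h𝓐 : 𝓐 ⊆ U.powerset)
    (h𝓑 : 𝓑 ⊆ W.powerset) :
    (𝓐 ×ˢ 𝓑 : Set (Finset V × Finset V)).InjOn fun P => P.1 ⊔ P.2 := by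
  have recover : ∀ P ∈ 𝓐 ×ˢ 𝓑, (P.1 ∪ P.2) \ W = P.1 ∧ (P.1 ∪ P.2) \ U = P.2 := by
    rintro ⟨A, B⟩ hP
    obtain ⟨hA, hB⟩ := mem_product.1 hP
    have hAU := mem_powerset.1 (h𝓐 hA)
    have hBW := mem_powerset.1 (h𝓑 hB)
    rw [union_sdiff_distrib, union_sdiff_distrib, sdiff_eq_empty_iff_subset.2 hBW,
      sdiff_eq_empty_iff_subset.2 hAU, sdiff_eq_self_of_disjoint (hUW.mono_left hAU),
      sdiff_eq_self_of_disjoint (hUW.symm.mono_left hBW), union_empty, empty_union]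
    exact ⟨rfl, rfl⟩
  intro P hP Q hQ hPQ
  obtain ⟨hP₁, hP₂⟩ := recover P (by exact_mod_cast hP)
  obtain ⟨hQ₁, hQ₂⟩ := recover Q (by exact_mod_cast hQ)
  simp only [sup_eq_union] at hPQ
  exact Prod.ext (hP₁.symm.trans (hPQ ▸ hQ₁)) (hP₂.symm.trans (hPQ ▸ hQ₂))

lemma card_sups_of_disjoint (hUW : Disjoint U W) (h𝓐 : 𝓐 ⊆ U.powerset)
    (h𝓑 : 𝓑 ⊆ W.powerset) : (𝓐 ⊻ 𝓑).card = 𝓐.card * 𝓑.card :=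
  (card_sups_iff _ _).2 (injOn_sup_of_disjoint hUW h𝓐 h𝓑)

lemma sum_sups_of_disjoint {M : Type*} [AddCommMonoid M] (hUW : Disjoint U W)
    (h𝓐 : 𝓐 ⊆ U.powerset) (h𝓑 : 𝓑 ⊆ W.powerset) (f : Finset V → M) :
    ∑ S ∈ 𝓐 ⊻ 𝓑, f S = ∑ A ∈ 𝓐, ∑ B ∈ 𝓑, f (A ∪ B) := by
  have hinj := injOn_sup_of_disjoint hUW h𝓐 h𝓑
  rw [← coe_product] at hinj
  change ∑ S ∈ image₂ (· ⊔ ·) 𝓐 𝓑, f S = _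
  rw [← image_uncurry_product,
    sum_image (g := Function.uncurry (· ⊔ ·)) hinj, sum_product]
  rfl

lemma sum_card_sups_of_disjoint (hUW : Disjoint U W) (h𝓐 : 𝓐 ⊆ U.powerset)
    (h𝓑 : 𝓑 ⊆ W.powerset) :
    ∑ S ∈ 𝓐 ⊻ 𝓑, (S.card : ℝ) =
      𝓑.card * ∑ A ∈ 𝓐, (A.card : ℝ) + 𝓐.card * ∑ B ∈ 𝓑, (B.card : ℝ) := by
  have hcard : ∀ A ∈ 𝓐, ∀ B ∈ 𝓑, ((A ∪ B).card : ℝ) = A.card + B.card := fun A hA B hB => by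
    rw [card_union_of_disjoint ((hUW.mono_left (mem_powerset.1 (h𝓐 hA))).mono_right
      (mem_powerset.1 (h𝓑 hB))), Nat.cast_add]
  rw [sum_sups_of_disjoint hUW h𝓐 h𝓑, sum_congr rfl fun A hA => sum_congr rfl (hcard A hA)]
  simp only [sum_add_distrib, sum_const, nsmul_eq_mul, mul_sum]

lemma defect_sups_of_disjoint (hUW : Disjoint U W) (h𝓐 : 𝓐 ⊆ U.powerset)
    (h𝓑 : 𝓑 ⊆ W.powerset) (h𝓐ne : 𝓐.Nonempty) (h𝓑ne : 𝓑.Nonempty) :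
    defect (U ∪ W) (𝓐 ⊻ 𝓑) = defect U 𝓐 + defect W 𝓑 := by
  have ha : (𝓐.card : ℝ) ≠ 0 := by exact_mod_cast h𝓐ne.card_pos.ne'
  have hb : (𝓑.card : ℝ) ≠ 0 := by exact_mod_cast h𝓑ne.card_pos.ne'
  rw [defect, defect, defect, card_union_of_disjoint hUW, sum_card_sups_of_disjoint hUW h𝓐 h𝓑,
    card_sups_of_disjoint hUW h𝓐 h𝓑]
  push_cast
  field_simp
  ring

lemma logb_card_sups_le_defect (hUW : Disjoint U W) (h𝓐 : 𝓐 ⊆ U.powerset)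
    (h𝓑 : 𝓑 ⊆ W.powerset) (h𝓐ne : 𝓐.Nonempty) (h𝓑ne : 𝓑.Nonempty)
    (hA : 1 / 2 * logb 2 𝓐.card ≤ defect U 𝓐) (hB : 1 / 2 * logb 2 𝓑.card ≤ defect W 𝓑) :
    1 / 2 * logb 2 (𝓐 ⊻ 𝓑).card ≤ defect (U ∪ W) (𝓐 ⊻ 𝓑) := by
  rw [defect_sups_of_disjoint hUW h𝓐 h𝓑 h𝓐ne h𝓑ne, card_sups_of_disjoint hUW h𝓐 h𝓑,
    Nat.cast_mul, logb_mul (by exact_mod_cast h𝓐ne.card_pos.ne')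
      (by exact_mod_cast h𝓑ne.card_pos.ne')]
  linarith

lemma injOn_insert (hr : r ∉ U) (h𝓕 : 𝓕 ⊆ U.powerset) : Set.InjOn (insert r) (𝓕 : Set (Finset V)) :=
  fun _ hS _ hT => insert_erase_invOn.2.injOn (notMem_mono (mem_powerset.1 (h𝓕 hS)) hr)
    (notMem_mono (mem_powerset.1 (h𝓕 hT)) hr)

lemma sum_card_image_insert (hr : r ∉ U) (h𝓕 : 𝓕 ⊆ U.powerset) :
    ∑ S ∈ 𝓕.image (insert r), (S.card : ℝ) = ∑ S ∈ 𝓕, (S.card : ℝ) + 𝓕.card := by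
  rw [sum_image (injOn_insert hr h𝓕), card_eq_sum_ones 𝓕, Nat.cast_sum, ← sum_add_distrib]
  refine sum_congr rfl fun S hS => ?_
  rw [card_insert_of_notMem (notMem_mono (mem_powerset.1 (h𝓕 hS)) hr)]
  push_cast; rfl

lemma defect_image_insert (hr : r ∉ U) (h𝓕 : 𝓕 ⊆ U.powerset) (h𝓕ne : 𝓕.Nonempty) :
    defect (insert r U) (𝓕.image (insert r)) = defect U 𝓕 := by
  have hN : (𝓕.card : ℝ) ≠ 0 := by exact_mod_cast h𝓕ne.card_pos.ne'
  rw [defect, defect, card_insert_of_notMem hr, sum_card_image_insert hr h𝓕,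
    card_image_of_injOn (injOn_insert hr h𝓕)]
  push_cast
  field_simp
  ring

lemma logb_card_cone_le_defect (hr : r ∉ U) (h𝓕 : 𝓕 ⊆ U.powerset) (h𝓕ne : 𝓕.Nonempty)
    (hF : 1 / 2 * logb 2 𝓕.card ≤ defect U 𝓕) :
    1 / 2 * logb 2 (cone r 𝓕).card ≤ defect (insert r U) (cone r 𝓕) := by
  have hempty : ∅ ∉ 𝓕.image (insert r) := by
    simp only [mem_image, insert_ne_empty, and_false, exists_false, not_false_eq_true]
  have hcard : ((cone r 𝓕).card : ℝ) = 1 + 𝓕.card := by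
    rw [cone, card_insert_of_notMem hempty, card_image_of_injOn (injOn_insert hr h𝓕)]
    push_cast; ring
  have hsum : ∑ S ∈ cone r 𝓕, (S.card : ℝ) = ∑ S ∈ 𝓕, (S.card : ℝ) + 𝓕.card := by
    rw [cone, sum_insert hempty, sum_card_image_insert hr h𝓕, card_empty, Nat.cast_zero,
      zero_add]
  rw [defect, hcard, hsum, card_insert_of_notMem hr, Nat.cast_add, Nat.cast_one]
  rw [defect] at hF
  have hb : (1 : ℝ) ≤ 𝓕.card := by exact_mod_cast h𝓕ne.card_pos
  have hm : 0 ≤ ∑ S ∈ 𝓕, (S.card : ℝ) := sum_nonneg fun _ _ => Nat.cast_nonneg _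
  generalize (𝓕.card : ℝ) = b at *
  generalize ∑ S ∈ 𝓕, (S.card : ℝ) = m at *
  have hmean : (m + b) / (1 + b) ≤ m / b + 1 - 1 / (1 + b) := by
    have hsplit : (m + b) / (1 + b) = m / (1 + b) + 1 - 1 / (1 + b) := by
      field_simp; ring
    rw [hsplit]
    gcongr
    linarith
  have htwo : 2 / (1 + b) = 2 * (1 / (1 + b)) := by ring
  linarith [logb_one_add_le hb]

end Defect

section AncestorClosed

variable {V : Type*}

/-- `p` is a parent map: the roots of the forest `B` are the vertices whose parent is not in `B`. -/
noncomputable def ancestorClosed (p : V → V) (B : Finset V) : Finset (Finset V) :=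
  B.powerset.filter fun S => ∀ v ∈ S, p v ∈ B → p v ∈ S

variable {p : V → V} {B C T S : Finset V} {r v : V}

lemma mem_ancestorClosed : S ∈ ancestorClosed p B ↔ S ⊆ B ∧ ∀ v ∈ S, p v ∈ B → p v ∈ S := by
  rw [ancestorClosed, mem_filter, mem_powerset]

lemma ancestorClosed_subset_powerset : ancestorClosed p B ⊆ B.powerset :=
  filter_subset _ _

lemma empty_mem_ancestorClosed : ∅ ∈ ancestorClosed p B :=
  mem_ancestorClosed.2 ⟨empty_subset B, fun _ hv => absurd hv (notMem_empty _)⟩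

lemma ancestorClosed_nonempty : (ancestorClosed p B).Nonempty :=
  ⟨∅, empty_mem_ancestorClosed⟩

lemma ancestorClosed_empty : ancestorClosed p ∅ = {∅} :=
  eq_singleton_iff_unique_mem.2
    ⟨empty_mem_ancestorClosed, fun _ hS => subset_empty.1 (mem_ancestorClosed.1 hS).1⟩

lemma ancestorClosed_eq_sups (hCB : C ⊆ B) (hup : ∀ v ∈ B, p v ∈ C → v ∈ C)
    (hdown : ∀ v ∈ C, p v ∈ B → p v ∈ C) :
    ancestorClosed p B = ancestorClosed p (B \ C) ⊻ ancestorClosed p C := by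
  ext S
  simp only [mem_sups, mem_ancestorClosed, sup_eq_union]
  constructor
  · rintro ⟨hSB, hS⟩
    refine ⟨S \ C, ⟨sdiff_subset_sdiff hSB le_rfl, fun v hv hpv => ?_⟩,
      S ∩ C, ⟨inter_subset_right, fun v hv hpv => ?_⟩, sdiff_union_inter S C⟩
    · rw [mem_sdiff] at hv hpv ⊢
      exact ⟨hS v hv.1 hpv.1, hpv.2⟩
    · rw [mem_inter] at hv ⊢
      exact ⟨hS v hv.1 (hCB hpv), hpv⟩
  · rintro ⟨S₁, ⟨hS₁, hcl₁⟩, S₂, ⟨hS₂, hcl₂⟩, rfl⟩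
    refine ⟨union_subset (hS₁.trans sdiff_subset) (hS₂.trans hCB), fun v hv hpv => ?_⟩
    rw [mem_union] at hv ⊢
    rcases hv with hv | hv
    · obtain ⟨hvB, hvC⟩ := mem_sdiff.1 (hS₁ hv)
      exact Or.inl (hcl₁ v hv (mem_sdiff.2 ⟨hpv, fun hpC => hvC (hup v hvB hpC)⟩))
    · exact Or.inr (hcl₂ v hv (hdown v (hS₂ hv) hpv))

lemma ancestorClosed_eq_cone (hr : r ∈ T) (hpr : p r ∉ T)
    (hroot : ∀ S ∈ ancestorClosed p T, S.Nonempty → r ∈ S) :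
    ancestorClosed p T = cone r (ancestorClosed p (T.erase r)) := by
  ext S
  simp only [cone, mem_insert, mem_image]
  constructor
  · intro hS
    rcases S.eq_empty_or_nonempty with rfl | hne
    · exact Or.inl rfl
    have hrS := hroot S hS hne
    obtain ⟨hST, hcl⟩ := mem_ancestorClosed.1 hS
    refine Or.inr ⟨S.erase r, mem_ancestorClosed.2 ⟨erase_subset_erase r hST, fun v hv hpv => ?_⟩,
      insert_erase hrS⟩
    exact mem_erase.2 ⟨(mem_erase.1 hpv).1, hcl v (mem_of_mem_erase hv) (mem_of_mem_erase hpv)⟩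
  · rintro (rfl | ⟨S', hS', rfl⟩)
    · exact empty_mem_ancestorClosed
    obtain ⟨hS'T, hcl⟩ := mem_ancestorClosed.1 hS'
    refine mem_ancestorClosed.2 ⟨insert_subset hr (hS'T.trans (erase_subset r T)), ?_⟩
    intro v hv hpv
    rcases mem_insert.1 hv with rfl | hv
    · exact absurd hpv hpr
    by_cases hpvr : p v = r
    · exact hpvr ▸ mem_insert_self r S'
    · exact mem_insert_of_mem (hcl v hv (mem_erase.2 ⟨hpvr, hpv⟩))

end AncestorClosed

section Descendants

open Relation

variable {V : Type*}

noncomputable def descendants (p : V → V) (B : Finset V) (r : V) : Finset V :=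
  B.filter (ReflTransGen (fun u v => v ∈ B ∧ p v = u) r)

variable {p : V → V} {B S : Finset V} {r v : V}

lemma descendants_subset : descendants p B r ⊆ B :=
  filter_subset _ _

lemma mem_of_reflTransGen (hr : r ∈ B) (h : ReflTransGen (fun u v => v ∈ B ∧ p v = u) r v) :
    v ∈ B := by
  rcases h.cases_tail with rfl | ⟨_, _, hv, _⟩
  exacts [hr, hv]

lemma mem_descendants (hr : r ∈ B) :
    v ∈ descendants p B r ↔ ReflTransGen (fun u v => v ∈ B ∧ p v = u) r v :=
  mem_filter.trans ⟨And.right, fun h => ⟨mem_of_reflTransGen hr h, h⟩⟩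

lemma self_mem_descendants (hr : r ∈ B) : r ∈ descendants p B r :=
  (mem_descendants hr).2 ReflTransGen.refl

lemma mem_descendants_of_parent_mem (hv : v ∈ B) (hpv : p v ∈ descendants p B r) :
    v ∈ descendants p B r :=
  mem_filter.2 ⟨hv, (mem_filter.1 hpv).2.tail ⟨hv, rfl⟩⟩

lemma parent_mem_descendants (hr : r ∈ B) (hv : v ∈ descendants p B r) (hvr : v ≠ r) :
    p v ∈ descendants p B r := by
  rcases ((mem_descendants hr).1 hv).cases_tail with rfl | ⟨u, hru, -, rfl⟩
  exacts [absurd rfl hvr, (mem_descendants hr).2 hru]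

lemma root_mem_of_mem_ancestorClosed_descendants (hr : r ∈ B)
    (hS : S ∈ ancestorClosed p (descendants p B r)) (hv : v ∈ S) : r ∈ S := by
  obtain ⟨hSD, hcl⟩ := mem_ancestorClosed.1 hS
  induction (mem_descendants hr).1 (hSD hv) with
  | refl => exact hv
  | tail hru huv ih =>
    obtain ⟨-, rfl⟩ := huv
    exact ih (hcl _ hv ((mem_descendants hr).2 hru))

end Descendants

theorem logb_card_ancestorClosed_le_defect {V : Type*} (p : V → V) (height : V → ℕ)
    (B : Finset V) (hp : ∀ v ∈ B, p v ∈ B → height (p v) < height v) :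
    1 / 2 * logb 2 (ancestorClosed p B).card ≤ defect B (ancestorClosed p B) := by
  induction B using Finset.strongInduction with
  | H B ih =>
  rcases B.eq_empty_or_nonempty with rfl | hne
  · simp [ancestorClosed_empty, defect]
  obtain ⟨r, hrB, hrmin⟩ := exists_min_image B height hne
  have hpr : p r ∉ B := fun hpB => (hp r hrB hpB).not_ge (hrmin _ hpB)
  set T := descendants p B r
  have hTB : T ⊆ B := descendants_subset
  have hrT : r ∈ T := self_mem_descendants hrB
  have hsplit : ancestorClosed p B = ancestorClosed p (B \ T) ⊻ ancestorClosed p T :=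
    ancestorClosed_eq_sups hTB (fun v hv => mem_descendants_of_parent_mem hv)
      (fun v hv hpv => parent_mem_descendants hrB hv (by rintro rfl; exact hpr hpv))
  have hcone : ancestorClosed p T = cone r (ancestorClosed p (T.erase r)) :=
    ancestorClosed_eq_cone hrT (fun hprT => hpr (hTB hprT))
      (fun S hS ⟨v, hv⟩ => root_mem_of_mem_ancestorClosed_descendants hrB hS hv)
  have hT : 1 / 2 * logb 2 (ancestorClosed p T).card ≤ defect T (ancestorClosed p T) := by
    have hsub : T.erase r ⊂ B := (erase_ssubset hrT).trans_subset hTB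
    have := logb_card_cone_le_defect (notMem_erase r T) ancestorClosed_subset_powerset
      ancestorClosed_nonempty (ih _ hsub fun v hv hpv => hp v (hsub.subset hv) (hsub.subset hpv))
    rwa [insert_erase hrT, ← hcone] at this
  have hsub : B \ T ⊂ B := sdiff_ssubset hTB ⟨r, hrT⟩
  have := logb_card_sups_le_defect sdiff_disjoint ancestorClosed_subset_powerset
    ancestorClosed_subset_powerset ancestorClosed_nonempty ancestorClosed_nonempty
    (ih _ hsub fun v hv hpv => hp v (hsub.subset hv) (hsub.subset hpv)) hT
  rwa [sdiff_union_of_subset hTB, ← hsplit] at this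

namespace SimpleGraph

variable {V : Type*} {G : SimpleGraph V}

noncomputable def Connected.pathTo (hG : G.Connected) (r v : V) : G.Path v r :=
  (hG.preconnected v r).some.toPath

noncomputable def Connected.parent (hG : G.Connected) (r v : V) : V :=
  (hG.pathTo r v : G.Walk v r).snd

noncomputable def Connected.depth (hG : G.Connected) (r v : V) : ℕ :=
  (hG.pathTo r v : G.Walk v r).length

namespace Connected

variable (hG : G.Connected) {r v : V}

lemma adj_parent (hv : v ≠ r) : G.Adj v (hG.parent r v) :=
  Walk.adj_snd (Walk.not_nil_of_ne hv)

lemma eq_pathTo (hA : G.IsAcyclic) (q : G.Path v r) : q = hG.pathTo r v :=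
  (hA.subsingleton_path v r).elim _ _

lemma depth_parent_add_one (hA : G.IsAcyclic) (hv : v ≠ r) :
    hG.depth r (hG.parent r v) + 1 = hG.depth r v := by
  have htail := congrArg Subtype.val (hG.eq_pathTo hA ⟨_, (hG.pathTo r v).2.tail⟩)
  rw [depth, depth, ← Walk.length_tail_add_one (p := (hG.pathTo r v : G.Walk v r))
    (Walk.not_nil_of_ne hv)]
  exact congrArg (Walk.length · + 1) htail.symm

lemma parent_mem_of_connected_induce (hA : G.IsAcyclic) {S : Set V}
    (hS : (G.induce S).Connected) (hr : r ∈ S) (hv : v ∈ S) : hG.parent r v ∈ S := by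
  obtain ⟨W⟩ := hS.preconnected ⟨v, hv⟩ ⟨r, hr⟩
  let W' : G.Walk v r := W.map (Embedding.induce S).toHom
  have hW' : ∀ x ∈ W'.support, x ∈ S := by
    intro x hx
    obtain ⟨y, -, rfl⟩ := List.mem_map.1 ((Walk.support_map _ _) ▸ hx)
    exact y.2
  have hpath := congrArg Subtype.val (hG.eq_pathTo hA W'.toPath)
  apply hW'
  apply Walk.support_toPath_subset_support
  rw [hpath]
  exact Walk.getVert_mem_support _ 1

lemma connected_induce_of_parent_mem (hA : G.IsAcyclic) {S : Set V} (hr : r ∈ S)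
    (hS : ∀ v ∈ S, v ≠ r → hG.parent r v ∈ S) : (G.induce S).Connected := by
  have hreach : ∀ n, ∀ v (hv : v ∈ S), hG.depth r v = n →
      (G.induce S).Reachable ⟨v, hv⟩ ⟨r, hr⟩ := by
    intro n
    induction n using Nat.strong_induction_on with
    | _ n ih =>
    intro v hv hn
    by_cases hvr : v = r
    · subst hvr; rfl
    have hadj : (G.induce S).Adj ⟨v, hv⟩ ⟨hG.parent r v, hS v hv hvr⟩ := hG.adj_parent hvr
    have hlt : hG.depth r (hG.parent r v) < n := by
      have := hG.depth_parent_add_one hA hvr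
      omega
    exact hadj.reachable.trans (ih _ hlt _ _ rfl)
  exact (connected_iff _).2 ⟨fun x y => (hreach _ x.1 x.2 rfl).trans (hreach _ y.1 y.2 rfl).symm,
    ⟨⟨r, hr⟩⟩⟩

end Connected

end SimpleGraph

lemma subtreesThrough_eq_image_insert {V : Type*} [Fintype V] {G : SimpleGraph V}
    (hG : G.Connected) (hA : G.IsAcyclic) (r : V) :
    subtreesThrough G r = (ancestorClosed (hG.parent r) (univ.erase r)).image (insert r) := by
  ext S
  simp only [subtreesThrough, mem_filter, mem_univ, true_and, mem_image]
  constructor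
  · rintro ⟨hrS, hS⟩
    refine ⟨S.erase r, mem_ancestorClosed.2 ⟨erase_subset_erase r (subset_univ S),
      fun v hv hpv => ?_⟩, insert_erase hrS⟩
    exact mem_erase.2 ⟨ne_of_mem_erase hpv,
      hG.parent_mem_of_connected_induce hA hS hrS (mem_of_mem_erase hv)⟩
  · rintro ⟨S, hS, rfl⟩
    refine ⟨mem_insert_self r S,
      hG.connected_induce_of_parent_mem hA (mem_coe.2 (mem_insert_self r S)) ?_⟩
    intro v hv hvr
    have hvS : v ∈ S := (mem_insert.1 hv).resolve_left hvr
    by_cases hpr : hG.parent r v = r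
    · simp [hpr]
    · exact mem_insert_of_mem ((mem_ancestorClosed.1 hS).2 v hvS
        (mem_erase.2 ⟨hpr, mem_univ _⟩))

/-- For every finite rooted tree `T`, the defect `Δ(T) = |T| − t(T)/s(T)` satisfies
`Δ(T) ≥ (1/2)·log₂ s(T)`, where `s(T)` is the number of subtrees containing the root
and `t(T)` their total order. -/
theorem stmt5 {V : Type*} [Fintype V] (G : SimpleGraph V) (hG : G.IsTree) (r : V) :
    (1 / 2) * Real.logb 2 ((subtreesThrough G r).card) ≤
      (Fintype.card V : ℝ) -
        (∑ s ∈ subtreesThrough G r, (s.card : ℝ)) / (subtreesThrough G r).card := by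
  set 𝓕 := ancestorClosed (hG.connected.parent r) (univ.erase r)
  have hr : r ∉ univ.erase r := notMem_erase r univ
  have hdefect : defect univ (𝓕.image (insert r)) = defect (univ.erase r) 𝓕 := by
    simpa only [insert_erase (mem_univ r)] using
      defect_image_insert hr ancestorClosed_subset_powerset ancestorClosed_nonempty
  rw [subtreesThrough_eq_image_insert hG.connected hG.isAcyclic r, ← card_univ]
  change _ ≤ defect univ _
  rw [hdefect, card_image_of_injOn (injOn_insert hr ancestorClosed_subset_powerset)]
  exact logb_card_ancestorClosed_le_defect _ (hG.connected.depth r) _ fun v hv _ =>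
    Nat.lt_of_succ_le (hG.connected.depth_parent_add_one hG.isAcyclic (ne_of_mem_erase hv)).le
end

section
/- Let T be a rooted tree whose root r has exactly one child, and let T₁ be the subtree rooted at that child. Then s(T) = 1 + s(T₁) and t(T) = 1 + s(T₁) + t(T₁), and consequently Δ(T) = Δ(T₁) + t(T₁)/(s(T₁)(1 + s(T₁))) ≥ Δ(T₁) + 1/(1 + s(T₁)). -/
open scoped Classical

/-!
A vertex set that contains `r` and induces a connected subgraph is either `{r}` or `insert r s`,
where `s` contains `c` but not `r` and is connected: deleting the leaf `r` cannot disconnect it,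
and adding `r` back along the edge `rc` keeps it connected. This bijection gives both counting
identities; the defect identity is then algebra, and the inequality comes from
`t(T₁) ≥ s(T₁)`.
-/

open SimpleGraph Finset

noncomputable def subtreesThroughAvoiding {V : Type*} [Fintype V] (G : SimpleGraph V)
    (c r : V) : Finset (Finset V) :=
  univ.filter (fun s => c ∈ s ∧ r ∉ s ∧ (G.induce (s : Set V)).Connected)

namespace SimpleGraph

variable {V : Type*} {G : SimpleGraph V} {r c : V}

lemma connected_induce_singleton (v : V) : (G.induce ({v} : Set V)).Connected := by
  rw [induce_singleton_eq_top]
  exact connected_top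

lemma Connected.induce_insert_of_adj {s : Set V} (hs : (G.induce s).Connected) (hcs : c ∈ s)
    (hrc : G.Adj r c) : (G.induce (insert r s)).Connected := by
  have h := induce_union_connected (induce_pair_connected_of_adj hrc).preconnected
    hs.preconnected ⟨c, by simp, hcs⟩
  rwa [Set.insert_union, Set.singleton_union, Set.insert_eq_of_mem hcs] at h

lemma Preconnected.induce_diff_singleton {S : Set V} (hS : (G.induce S).Preconnected)
    (hr : (G.neighborSet r).Subsingleton) : (G.induce (S \ {r})).Preconnected := by
  have h := hS.induce_of_degree_eq_one (s := {x : S | x.1 ≠ r}) fun x hx a ha b hb ↦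
    Subtype.ext <| hr (by simp_all) (by simp_all)
  refine h.map ⟨fun x ↦ ⟨x.1.1, x.1.2, x.2⟩, fun hxy ↦ hxy⟩ ?_
  rintro ⟨x, hxS, hxr⟩
  exact ⟨⟨⟨x, hxS⟩, hxr⟩, rfl⟩

lemma Connected.mem_of_unique_adj {S : Set V} (hS : (G.induce S).Connected) (hrS : r ∈ S)
    {x : V} (hxS : x ∈ S) (hxr : x ≠ r) (huniq : ∀ u, G.Adj r u → u = c) : c ∈ S := by
  have : Nontrivial S := nontrivial_of_ne ⟨r, hrS⟩ ⟨x, hxS⟩ (Subtype.coe_ne_coe.1 hxr.symm)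
  obtain ⟨u, hu⟩ := hS.preconnected.exists_adj_of_nontrivial ⟨r, hrS⟩
  exact huniq u.1 hu ▸ u.2

variable [Fintype V]

lemma singleton_mem_subtreesThroughAvoiding (hrc : r ≠ c) :
    {c} ∈ subtreesThroughAvoiding G c r := by
  rw [subtreesThroughAvoiding, mem_filter_univ, coe_singleton]
  exact ⟨mem_singleton_self c, by simpa using hrc, connected_induce_singleton c⟩

lemma subtreesThrough_eq_insert_image (hrc : G.Adj r c) (huniq : ∀ u, G.Adj r u → u = c) :
    subtreesThrough G r = insert {r} ((subtreesThroughAvoiding G c r).image (insert r)) := by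
  ext S
  simp only [subtreesThrough, subtreesThroughAvoiding, mem_insert, mem_image, mem_filter_univ]
  constructor
  · rintro ⟨hrS, hS⟩
    by_cases hSr : S = {r}
    · exact .inl hSr
    obtain ⟨x, hxS, hxr⟩ : ∃ x ∈ S, x ≠ r := by
      by_contra! h
      exact hSr (eq_singleton_iff_unique_mem.2 ⟨hrS, h⟩)
    have hcS : c ∈ S := hS.mem_of_unique_adj (mem_coe.2 hrS) hxS hxr huniq
    have hS' : (G.induce (S \ {r} : Set V)).Connected :=
      (connected_iff _).2 ⟨hS.preconnected.induce_diff_singleton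
        fun a ha b hb ↦ (huniq a ha).trans (huniq b hb).symm, ⟨⟨c, hcS, hrc.ne'⟩⟩⟩
    refine .inr ⟨S.erase r, ⟨mem_erase.2 ⟨hrc.ne', hcS⟩, notMem_erase r S, ?_⟩,
      insert_erase hrS⟩
    rwa [coe_erase]
  · rintro (rfl | ⟨s, ⟨hcs, -, hs⟩, rfl⟩)
    · rw [coe_singleton]
      exact ⟨mem_singleton_self r, connected_induce_singleton r⟩
    · rw [coe_insert]
      exact ⟨mem_insert_self r s, hs.induce_insert_of_adj hcs hrc⟩

end SimpleGraph

namespace Finset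

variable {V : Type*} {F : Finset (Finset V)}

lemma card_le_sum_card (hF : ∀ s ∈ F, s.Nonempty) : F.card ≤ ∑ s ∈ F, s.card := by
  simpa using card_nsmul_le_sum F card 1 fun s hs ↦ (hF s hs).card_pos

variable [DecidableEq V] {r : V}

lemma injOn_insert (r : V) : Set.InjOn (insert r) {s : Finset V | r ∉ s} :=
  insert_erase_invOn.2.injOn

lemma singleton_notMem_image_insert (hF : ∀ s ∈ F, r ∉ s ∧ s.Nonempty) :
    {r} ∉ F.image (insert r) := by
  simp only [mem_image, not_exists, not_and]
  intro s hs hsr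
  obtain ⟨hrs, x, hx⟩ := hF s hs
  have : x = r := mem_singleton.1 (hsr ▸ mem_insert_of_mem hx)
  exact hrs (this ▸ hx)

lemma card_insert_singleton_image_insert (hF : ∀ s ∈ F, r ∉ s ∧ s.Nonempty) :
    (insert {r} (F.image (insert r))).card = 1 + F.card := by
  rw [card_insert_of_notMem (singleton_notMem_image_insert hF),
    card_image_of_injOn ((injOn_insert r).mono fun s hs ↦ (hF s hs).1), add_comm]

lemma sum_card_insert_singleton_image_insert (hF : ∀ s ∈ F, r ∉ s ∧ s.Nonempty) :
    ∑ s ∈ insert {r} (F.image (insert r)), s.card = 1 + F.card + ∑ s ∈ F, s.card := by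
  rw [sum_insert (singleton_notMem_image_insert hF),
    sum_image ((injOn_insert r).mono fun s hs ↦ (hF s hs).1),
    sum_congr rfl fun s hs ↦ card_insert_of_notMem (hF s hs).1, sum_add_distrib, sum_const,
    smul_eq_mul, mul_one, card_singleton]
  omega

end Finset

lemma sub_add_div_one_add_eq {N n T : ℝ} (hn : 0 < n) :
    N - (1 + n + T) / (1 + n) = ((N - 1) - T / n) + T / (n * (1 + n)) := by
  field_simp
  ring

lemma one_div_one_add_le_div_mul_one_add {n T : ℝ} (hn : 0 < n) (hnT : n ≤ T) :
    1 / (1 + n) ≤ T / (n * (1 + n)) := by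
  rw [div_le_div_iff₀ (by positivity) (by positivity)]
  nlinarith

theorem stmt6_general {V : Type*} [Fintype V] (G : SimpleGraph V) (r c : V)
    (hc : G.Adj r c) (huniq : ∀ u : V, G.Adj r u → u = c)
    (s1 : Finset (Finset V))
    (hs1 : s1 = Finset.univ.filter
      (fun s : Finset V => c ∈ s ∧ r ∉ s ∧ (G.induce (s : Set V)).Connected)) :
    (subtreesThrough G r).card = 1 + s1.card ∧
    (∑ s ∈ subtreesThrough G r, s.card) = 1 + s1.card + ∑ s ∈ s1, s.card ∧
    (Fintype.card V : ℝ) -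
        (∑ s ∈ subtreesThrough G r, (s.card : ℝ)) / (subtreesThrough G r).card =
      (((Fintype.card V : ℝ) - 1) - (∑ s ∈ s1, (s.card : ℝ)) / s1.card) +
        (∑ s ∈ s1, (s.card : ℝ)) / (s1.card * (1 + s1.card)) ∧
    (((Fintype.card V : ℝ) - 1) - (∑ s ∈ s1, (s.card : ℝ)) / s1.card) +
        1 / (1 + (s1.card : ℝ)) ≤
      (Fintype.card V : ℝ) -
        (∑ s ∈ subtreesThrough G r, (s.card : ℝ)) / (subtreesThrough G r).card := by
  obtain rfl : s1 = subtreesThroughAvoiding G c r := hs1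
  set F := subtreesThroughAvoiding G c r
  have hF : ∀ s ∈ F, r ∉ s ∧ s.Nonempty := fun s hs ↦ by
    obtain ⟨hcs, hrs, -⟩ := (mem_filter_univ s).1 hs
    exact ⟨hrs, c, hcs⟩
  have hcard :=
    subtreesThrough_eq_insert_image hc huniq ▸ card_insert_singleton_image_insert hF
  have hsum :=
    subtreesThrough_eq_insert_image hc huniq ▸ sum_card_insert_singleton_image_insert hF
  have hcardR : ((subtreesThrough G r).card : ℝ) = 1 + F.card := by exact_mod_cast hcard
  have hsumR :
      ∑ s ∈ subtreesThrough G r, (s.card : ℝ) = 1 + F.card + ∑ s ∈ F, (s.card : ℝ) := by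
    exact_mod_cast hsum
  have hn : (0 : ℝ) < F.card := by
    exact_mod_cast card_pos.2 ⟨_, singleton_mem_subtreesThroughAvoiding hc.ne⟩
  have hnT : (F.card : ℝ) ≤ ∑ s ∈ F, (s.card : ℝ) := by
    exact_mod_cast card_le_sum_card fun s hs ↦ (hF s hs).2
  rw [hcardR, hsumR, sub_add_div_one_add_eq hn]
  exact ⟨hcard, hsum, rfl, by linarith [one_div_one_add_le_div_mul_one_add hn hnT]⟩

/-- Let `T` be a tree rooted at `r`, where `r` has exactly one child `c`, and let `T₁`
be the subtree rooted at `c` (i.e. `T − r`). Then `s(T) = 1 + s(T₁)`,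
`t(T) = 1 + s(T₁) + t(T₁)`, and the defects satisfy
`Δ(T) = Δ(T₁) + t(T₁)/(s(T₁)(1 + s(T₁))) ≥ Δ(T₁) + 1/(1 + s(T₁))`. -/
theorem stmt6 {V : Type*} [Fintype V] (G : SimpleGraph V) (hG : G.IsTree) (r c : V)
    (hc : G.Adj r c) (huniq : ∀ u : V, G.Adj r u → u = c)
    (s1 : Finset (Finset V))
    (hs1 : s1 = Finset.univ.filter
      (fun s : Finset V => c ∈ s ∧ r ∉ s ∧ (G.induce (s : Set V)).Connected)) :
    (subtreesThrough G r).card = 1 + s1.card ∧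
    (∑ s ∈ subtreesThrough G r, s.card) = 1 + s1.card + ∑ s ∈ s1, s.card ∧
    (Fintype.card V : ℝ) -
        (∑ s ∈ subtreesThrough G r, (s.card : ℝ)) / (subtreesThrough G r).card =
      (((Fintype.card V : ℝ) - 1) - (∑ s ∈ s1, (s.card : ℝ)) / s1.card) +
        (∑ s ∈ s1, (s.card : ℝ)) / (s1.card * (1 + s1.card)) ∧
    (((Fintype.card V : ℝ) - 1) - (∑ s ∈ s1, (s.card : ℝ)) / s1.card) +
        1 / (1 + (s1.card : ℝ)) ≤
      (Fintype.card V : ℝ) -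
        (∑ s ∈ subtreesThrough G r, (s.card : ℝ)) / (subtreesThrough G r).card :=
  stmt6_general G r c hc huniq s1 hs1
end

section
/- Let T be a tree and r a vertex of T, with branches T₁', ..., T_k' formed by adding r back to each component of T − r. Then the local mean subtree orders satisfy μ_T(r) − 1 = ∑_{i=1}^k (μ_{T_i'}(r) − 1). -/
/-
A subtree `S` through `r` is determined by its traces `S ∩ T_u'` on the branches, and conversely
any choice of one subtree through `r` in each branch glues to a subtree through `r`: in a tree,
`S` is connected iff it contains the path from `r` to each of its vertices, and that path stays
inside one branch. So the subtrees through `r` are in bijection with the product of the sets of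
branch subtrees through `r`, and `|S| - 1 = ∑ᵤ (|S ∩ T_u'| - 1)` since the branches meet only
in `r`. The mean of a sum of coordinate functions over a product of finite sets is the sum of
the means over the factors, which is the identity.
-/

open scoped Classical

/-- The branch of a neighbour `u` of `r` in a tree `G`: the vertices `v ≠ r` whose
every walk to `r` passes through `u` (the component of `G − r` containing `u`). -/
def branch {V : Type*} (G : SimpleGraph V) (r u : V) : Set V :=
  {v | v ≠ r ∧ ∀ p : G.Walk v r, u ∈ p.support}

/-- The subtrees of the branch-with-root tree `T_u'` (the branch of `u` together with
`r`) that contain the root `r`. -/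
noncomputable def branchSubtrees {V : Type*} [Fintype V] (G : SimpleGraph V) (r u : V) :
    Finset (Finset V) :=
  Finset.univ.filter (fun s => r ∈ s ∧ (s : Set V) ⊆ branch G r u ∪ {r} ∧
    (G.induce (s : Set V)).Connected)

open Finset
open scoped BigOperators

theorem Fintype.sum_piFinset_comp_eval {ι M : Type*} [Fintype ι] [DecidableEq ι] {α : ι → Type*}
    [∀ i, DecidableEq (α i)] [AddCommMonoid M] (t : ∀ i, Finset (α i)) (i : ι) (f : α i → M) :
    ∑ p ∈ piFinset t, f (p i) = (∏ j ∈ univ.erase i, #(t j)) • ∑ a ∈ t i, f a := by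
  rw [← sum_fiberwise_of_maps_to (g := fun p ↦ p i) fun p hp ↦ mem_piFinset.1 hp i, smul_sum]
  refine Finset.sum_congr rfl fun a ha ↦ ?_
  rw [Finset.sum_congr rfl fun p hp ↦ by rw [(mem_filter.1 hp).2], sum_const,
    card_filter_piFinset_eq_of_mem t i ha]

theorem Fintype.expect_piFinset_comp_eval {ι M : Type*} [Fintype ι] [DecidableEq ι]
    {α : ι → Type*} [∀ i, DecidableEq (α i)] [AddCommMonoid M] [Module ℚ≥0 M]
    {t : ∀ i, Finset (α i)} (ht : ∀ j, (t j).Nonempty) (i : ι) (f : α i → M) :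
    𝔼 p ∈ piFinset t, f (p i) = 𝔼 a ∈ t i, f a := by
  have hP : (∏ j ∈ univ.erase i, #(t j) : ℚ≥0) ≠ 0 :=
    prod_ne_zero_iff.2 fun j _ ↦ by exact_mod_cast (ht j).card_ne_zero
  rw [expect, expect, sum_piFinset_comp_eval, card_piFinset, ← mul_prod_erase _ _ (mem_univ i),
    ← Nat.cast_smul_eq_nsmul ℚ≥0, smul_smul, Nat.cast_mul, Nat.cast_prod, mul_inv,
    inv_mul_cancel_right₀ hP]

namespace SimpleGraph.IsTree

variable {V : Type*} {G : SimpleGraph V}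

noncomputable def path (hG : G.IsTree) (u v : V) : G.Walk u v :=
  (hG.existsUnique_path u v).exists.choose

theorem isPath_path (hG : G.IsTree) (u v : V) : (hG.path u v).IsPath :=
  (hG.existsUnique_path u v).exists.choose_spec

theorem eq_path (hG : G.IsTree) {u v : V} {p : G.Walk u v} (hp : p.IsPath) : p = hG.path u v :=
  (hG.existsUnique_path u v).unique hp (hG.isPath_path u v)

theorem support_path_subset (hG : G.IsTree) {u v : V} (p : G.Walk u v) :
    (hG.path u v).support ⊆ p.support := by
  rw [← hG.eq_path p.bypass_isPath]
  exact p.support_bypass_subset_support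

theorem mem_support_path_self_iff (hG : G.IsTree) {v w : V} :
    w ∈ (hG.path v v).support ↔ w = v := by
  rw [← hG.eq_path .nil, Walk.support_nil, List.mem_singleton]

theorem connected_induce_iff_forall_support_path_subset (hG : G.IsTree) {s : Set V} {r : V}
    (hr : r ∈ s) :
    (G.induce s).Connected ↔ ∀ v ∈ s, ∀ w ∈ (hG.path r v).support, w ∈ s := by
  refine ⟨fun hc v hv w hw ↦ ?_, fun h ↦ induce_connected_of_patches r hr fun {v} hv ↦
    ⟨{w | w ∈ (hG.path r v).support}, h v hv, (hG.path r v).start_mem_support,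
      (hG.path r v).end_mem_support, (hG.path r v).connected_induce_support.preconnected _ _⟩⟩
  have hwq := hG.support_path_subset ((hc ⟨r, hr⟩ ⟨v, hv⟩).some.map (Embedding.induce s).toHom) hw
  rw [Walk.support_map, List.mem_map] at hwq
  obtain ⟨x, -, rfl⟩ := hwq
  exact x.2

variable {r u v w : V}

theorem mem_branch_iff (hG : G.IsTree) (hadj : G.Adj r u) :
    v ∈ branch G r u ↔ v ≠ r ∧ (hG.path r v).snd = u := by
  refine ⟨fun ⟨hv, h⟩ ↦ ⟨hv, ?_⟩, fun ⟨hv, hsnd⟩ ↦ ⟨hv, fun p ↦ ?_⟩⟩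
  · have hu := h (hG.path r v).reverse
    rw [Walk.support_reverse, List.mem_reverse] at hu
    exact (hG.isAcyclic.eq_snd_of_adj_start (hG.isPath_path r v) hadj hu).symm
  · have hsnd_mem : u ∈ (hG.path r v).support := by
      rw [← hsnd]; exact (hG.path r v).getVert_mem_support 1
    have hu := hG.support_path_subset p.reverse hsnd_mem
    rwa [Walk.support_reverse, List.mem_reverse] at hu

theorem exists_adj_mem_branch (hG : G.IsTree) (hv : v ≠ r) :
    ∃ u, G.Adj r u ∧ v ∈ branch G r u :=
  have hadj := Walk.adj_snd (Walk.not_nil_of_ne hv.symm : ¬ (hG.path r v).Nil)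
  ⟨_, hadj, (hG.mem_branch_iff hadj).2 ⟨hv, rfl⟩⟩

theorem eq_of_mem_branch (hG : G.IsTree) {u' : V} (hadj : G.Adj r u) (hadj' : G.Adj r u')
    (hv : v ∈ branch G r u) (hv' : v ∈ branch G r u') : u = u' :=
  ((hG.mem_branch_iff hadj).1 hv).2.symm.trans ((hG.mem_branch_iff hadj').1 hv').2

theorem mem_branch_of_mem_support_path (hG : G.IsTree) (hadj : G.Adj r u)
    (hv : v ∈ branch G r u) (hw : w ∈ (hG.path r v).support) (hwr : w ≠ r) : w ∈ branch G r u := by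
  refine (hG.mem_branch_iff hadj).2 ⟨hwr, ?_⟩
  rw [← hG.eq_path ((hG.isPath_path r v).takeUntil hw), Walk.snd_takeUntil hwr]
  exact ((hG.mem_branch_iff hadj).1 hv).2

end SimpleGraph.IsTree

theorem Finset.expect_sub_const {ι M : Type*} [AddCommGroup M] [Module ℚ≥0 M] {s : Finset ι}
    (hs : s.Nonempty) (f : ι → M) (a : M) : 𝔼 i ∈ s, (f i - a) = 𝔼 i ∈ s, f i - a := by
  rw [expect_sub_distrib, expect_const hs]

section Branches

open SimpleGraph

variable {V : Type*} {G : SimpleGraph V} {r : V}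

noncomputable def restrictToBranch (G : SimpleGraph V) (r : V) (S : Finset V)
    (u : G.neighborSet r) : Finset V :=
  {x ∈ S | x ∈ branch G r u ∪ {r}}

theorem mem_restrictToBranch {S : Finset V} {u : G.neighborSet r} {x : V} (hxr : x ≠ r) :
    x ∈ restrictToBranch G r S u ↔ x ∈ S ∧ x ∈ branch G r u := by
  simp [restrictToBranch, hxr]

variable [Fintype V]

noncomputable def joinAtRoot (r : V) (p : G.neighborSet r → Finset V) : Finset V :=
  insert r (univ.biUnion p)

theorem mem_subtreesThrough {S : Finset V} :
    S ∈ subtreesThrough G r ↔ r ∈ S ∧ (G.induce (S : Set V)).Connected := by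
  simp [subtreesThrough]

theorem mem_branchSubtrees {S : Finset V} {u : V} :
    S ∈ branchSubtrees G r u ↔
      r ∈ S ∧ (S : Set V) ⊆ branch G r u ∪ {r} ∧ (G.induce (S : Set V)).Connected := by
  simp [branchSubtrees]

theorem singleton_mem_subtreesThrough : {r} ∈ subtreesThrough G r :=
  mem_subtreesThrough.2 ⟨mem_singleton_self r, by rw [coe_singleton]; simp⟩

theorem singleton_mem_branchSubtrees (u : V) : {r} ∈ branchSubtrees G r u :=
  mem_branchSubtrees.2 ⟨mem_singleton_self r, by simp, by rw [coe_singleton]; simp⟩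

theorem restrictToBranch_mem_branchSubtrees (hG : G.IsTree) {S : Finset V}
    (hS : S ∈ subtreesThrough G r) (u : G.neighborSet r) :
    restrictToBranch G r S u ∈ branchSubtrees G r u := by
  obtain ⟨hrS, hS⟩ := mem_subtreesThrough.1 hS
  have hr : r ∈ restrictToBranch G r S u := mem_filter.2 ⟨hrS, Or.inr rfl⟩
  refine mem_branchSubtrees.2 ⟨hr, fun x hx ↦ (mem_filter.1 hx).2, ?_⟩
  rw [hG.connected_induce_iff_forall_support_path_subset hr]
  rw [hG.connected_induce_iff_forall_support_path_subset hrS] at hS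
  intro v hv w hw
  obtain ⟨hvS, hv⟩ := mem_filter.1 hv
  refine mem_filter.2 ⟨hS v hvS w hw, ?_⟩
  by_cases hwr : w = r
  · exact Or.inr hwr
  rcases hv with hv | rfl
  · exact Or.inl (hG.mem_branch_of_mem_support_path u.2 hv hw hwr)
  · exact absurd (hG.mem_support_path_self_iff.1 hw) hwr

theorem joinAtRoot_mem_subtreesThrough (hG : G.IsTree) {p : G.neighborSet r → Finset V}
    (hp : ∀ u : G.neighborSet r, p u ∈ branchSubtrees G r u) :
    joinAtRoot r p ∈ subtreesThrough G r := by
  have hr : r ∈ joinAtRoot r p := mem_insert_self r _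
  refine mem_subtreesThrough.2 ⟨hr, ?_⟩
  rw [hG.connected_induce_iff_forall_support_path_subset hr]
  intro v hv w hw
  rcases mem_insert.1 hv with rfl | hv
  · rwa [hG.mem_support_path_self_iff.1 hw]
  obtain ⟨u, -, hvu⟩ := mem_biUnion.1 hv
  obtain ⟨hru, -, hpu⟩ := mem_branchSubtrees.1 (hp u)
  rw [hG.connected_induce_iff_forall_support_path_subset hru] at hpu
  exact mem_insert_of_mem (mem_biUnion.2 ⟨u, mem_univ u, hpu v hvu w hw⟩)

theorem joinAtRoot_restrictToBranch (hG : G.IsTree) {S : Finset V} (hrS : r ∈ S) :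
    joinAtRoot r (restrictToBranch G r S) = S := by
  ext x
  by_cases hxr : x = r
  · subst hxr
    simp [joinAtRoot, hrS]
  obtain ⟨u, hadj, hxu⟩ := hG.exists_adj_mem_branch hxr
  simp only [joinAtRoot, restrictToBranch, mem_insert, hxr, false_or, mem_biUnion, mem_univ,
    true_and, mem_filter]
  exact ⟨fun ⟨_, hxS, _⟩ ↦ hxS, fun hxS ↦ ⟨⟨u, hadj⟩, hxS, Or.inl hxu⟩⟩

theorem restrictToBranch_joinAtRoot (hG : G.IsTree) {p : G.neighborSet r → Finset V}
    (hp : ∀ u : G.neighborSet r, p u ∈ branchSubtrees G r u) :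
    restrictToBranch G r (joinAtRoot r p) = p := by
  funext u
  ext x
  by_cases hxr : x = r
  · subst hxr
    simp [restrictToBranch, joinAtRoot, (mem_branchSubtrees.1 (hp u)).1]
  have hbranch : ∀ {u'}, x ∈ p u' → x ∈ branch G r u' := fun hx ↦
    ((mem_branchSubtrees.1 (hp _)).2.1 hx).resolve_right hxr
  simp only [restrictToBranch, joinAtRoot, mem_filter, mem_insert, hxr, false_or, mem_biUnion,
    mem_univ, true_and, Set.mem_union, Set.mem_singleton_iff, or_false]
  refine ⟨fun ⟨⟨u', hxu'⟩, hxu⟩ ↦ ?_, fun hx ↦ ⟨⟨u, hx⟩, hbranch hx⟩⟩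
  rwa [Subtype.ext (hG.eq_of_mem_branch u'.2 u.2 (hbranch hxu') hxu)] at hxu'

theorem card_sub_one_eq_sum_restrictToBranch (hG : G.IsTree) {S : Finset V} (hrS : r ∈ S) :
    (#S : ℝ) - 1 = ∑ u, ((#(restrictToBranch G r S u) : ℝ) - 1) := by
  have hsplit : S.erase r = univ.biUnion fun u ↦ (restrictToBranch G r S u).erase r := by
    ext x
    by_cases hxr : x = r
    · simp [hxr]
    obtain ⟨u, hadj, hxu⟩ := hG.exists_adj_mem_branch hxr
    simp only [mem_erase, mem_biUnion, mem_univ, true_and, mem_restrictToBranch hxr, hxr,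
      Ne, not_false_eq_true]
    exact ⟨fun hxS ↦ ⟨⟨u, hadj⟩, hxS, hxu⟩, fun ⟨_, hxS, _⟩ ↦ hxS⟩
  have hdisj : ((univ : Finset (G.neighborSet r)) : Set (G.neighborSet r)).PairwiseDisjoint
      fun u ↦ (restrictToBranch G r S u).erase r := by
    intro u _ u' _ huu'
    refine disjoint_left.2 fun x hx hx' ↦ huu' (Subtype.ext ?_)
    obtain ⟨hxr, hx⟩ := mem_erase.1 hx
    obtain ⟨-, hx'⟩ := mem_erase.1 hx'
    exact hG.eq_of_mem_branch u.2 u'.2 ((mem_restrictToBranch hxr).1 hx).2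
      ((mem_restrictToBranch hxr).1 hx').2
  rw [← cast_card_erase_of_mem hrS, hsplit, card_biUnion hdisj, Nat.cast_sum]
  exact Finset.sum_congr rfl fun u _ ↦ cast_card_erase_of_mem (mem_filter.2 ⟨hrS, Or.inr rfl⟩)

theorem expect_card_sub_one_subtreesThrough (hG : G.IsTree) (r : V) :
    𝔼 S ∈ subtreesThrough G r, ((#S : ℝ) - 1) =
      𝔼 p ∈ Fintype.piFinset (fun u : G.neighborSet r ↦ branchSubtrees G r u),
        ∑ u, ((#(p u) : ℝ) - 1) :=
  expect_nbij' (restrictToBranch G r) (joinAtRoot r)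
    (fun _ hS ↦ Fintype.mem_piFinset.2 (restrictToBranch_mem_branchSubtrees hG hS))
    (fun _ hp ↦ joinAtRoot_mem_subtreesThrough hG (Fintype.mem_piFinset.1 hp))
    (fun _ hS ↦ joinAtRoot_restrictToBranch hG (mem_subtreesThrough.1 hS).1)
    (fun _ hp ↦ restrictToBranch_joinAtRoot hG (Fintype.mem_piFinset.1 hp))
    (fun _ hS ↦ card_sub_one_eq_sum_restrictToBranch hG (mem_subtreesThrough.1 hS).1)

end Branches

/-- For a tree `T` and a vertex `r` with branches `T_i'` (one for each neighbour of
`r`, formed by adding `r` back to a component of `T − r`), the local mean subtree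
orders satisfy `μ_T(r) − 1 = ∑ᵢ (μ_{T_i'}(r) − 1)`. -/
theorem stmt9 {V : Type*} [Fintype V] (G : SimpleGraph V) (hG : G.IsTree) (r : V) :
    (∑ s ∈ subtreesThrough G r, (s.card : ℝ)) / (subtreesThrough G r).card - 1 =
      ∑ u ∈ Finset.univ.filter (fun u => G.Adj r u),
        ((∑ s ∈ branchSubtrees G r u, (s.card : ℝ)) / (branchSubtrees G r u).card - 1) := by
  set B : G.neighborSet r → Finset (Finset V) := fun u ↦ branchSubtrees G r u
  have hT : (subtreesThrough G r).Nonempty := ⟨_, singleton_mem_subtreesThrough⟩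
  have hB (u : G.neighborSet r) : (B u).Nonempty := ⟨_, singleton_mem_branchSubtrees (u : V)⟩
  rw [sum_subtype _ (p := (· ∈ G.neighborSet r)) fun u ↦ by simp]
  simp_rw [← expect_eq_sum_div_card]
  calc 𝔼 S ∈ subtreesThrough G r, (#S : ℝ) - 1
      = 𝔼 p ∈ Fintype.piFinset B, ∑ u, ((#(p u) : ℝ) - 1) := by
        rw [← expect_sub_const hT, expect_card_sub_one_subtreesThrough hG]
    _ = ∑ u, 𝔼 p ∈ Fintype.piFinset B, ((#(p u) : ℝ) - 1) := expect_sum_comm ..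
    _ = ∑ u, (𝔼 s ∈ B u, (#s : ℝ) - 1) := Finset.sum_congr rfl fun u _ ↦ by
        rw [Fintype.expect_piFinset_comp_eval hB u fun s ↦ (#s : ℝ) - 1, expect_sub_const (hB u)]
end

section
/- For a double-broom consisting of a path with n − 2s vertices and s pendant leaves attached at each of its two endpoints (total n vertices, with 1 ≤ s and n − 2s ≥ 2), the total number of subtrees equals 2^{2s} + 2^{s+1}(n − 2s − 1) + C(n−2s−1, 2) + 2s. -/
open scoped Classical

/-- The double-broom on `n` vertices: vertices `0,…,n−2s−1` form a path, vertices
`n−2s,…,n−s−1` are leaves attached to the endpoint `0` of the path, and vertices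
`n−s,…,n−1` are leaves attached to the other endpoint `n−2s−1`. -/
def doubleBroom (n s : ℕ) : SimpleGraph (Fin n) :=
  SimpleGraph.fromRel (fun i j =>
    (i.val + 1 = j.val ∧ j.val < n - 2 * s) ∨
    (i.val = 0 ∧ n - 2 * s ≤ j.val ∧ j.val < n - 2 * s + s) ∨
    (i.val = n - 2 * s - 1 ∧ n - 2 * s + s ≤ j.val))

/-! Write `m = n − 2s` for the number of path vertices. A connected vertex set that contains path
vertices on both sides of a path vertex `x` must contain `x`, since every edge out of
`{w | w < x} ∪ {left leaves}` ends at `x`; and a leaf of a subtree with at least two vertices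
forces its attachment vertex into it. Hence a subtree meeting the path meets it in an interval
`[a, c)`, and may contain left (right) leaves only if `a = 0` (`c = m`); conversely every such set
is connected. Sorting these by which ends of the path they contain gives `2^s · 2^s`,
`(m − 1) · 2^s` twice, and `C(m − 1, 2)` (choices `1 ≤ a < c ≤ m − 1`) subtrees. A subtree
avoiding the path is a single leaf, which gives the remaining `2s`. -/

open Finset

namespace SimpleGraph

variable {V : Type*} {G : SimpleGraph V}

theorem exists_adj_of_induce_preconnected {S X : Set V} (hS : (G.induce S).Preconnected)
    {u v : V} (hu : u ∈ S) (hv : v ∈ S) (huX : u ∈ X) (hvX : v ∉ X) :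
    ∃ u' ∈ S, ∃ v' ∈ S, u' ∈ X ∧ v' ∉ X ∧ G.Adj u' v' := by
  obtain ⟨p⟩ := hS ⟨u, hu⟩ ⟨v, hv⟩
  obtain ⟨d, -, hd₁, hd₂⟩ := p.exists_boundary_dart {w | w.1 ∈ X} huX hvX
  exact ⟨d.fst, d.fst.2, d.snd, d.snd.2, hd₁, hd₂, d.adj⟩

theorem induce_union_connected_of_forall_exists_adj {s t : Set V} (hs : (G.induce s).Connected)
    (ht : ∀ v ∈ t, ∃ w ∈ s, G.Adj w v) : (G.induce (s ∪ t)).Connected := by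
  obtain ⟨⟨u, hu⟩⟩ := hs.nonempty
  refine induce_connected_of_patches u (Or.inl hu) fun {v} hv => ?_
  rcases hv with hv | hv
  · exact ⟨s, Set.subset_union_left, hu, hv, hs.preconnected _ _⟩
  · obtain ⟨w, hw, hwv⟩ := ht v hv
    have hconn := induce_union_connected hs.preconnected
      (induce_pair_connected_of_adj hwv).preconnected ⟨w, hw, by simp⟩
    refine ⟨s ∪ {w, v}, ?_, Or.inl hu, Or.inr (by simp), hconn.preconnected _ _⟩
    simp [Set.insert_subset_iff, Set.subset_union_left, hv, hw]

end SimpleGraph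

lemma mem_subtrees {V : Type*} [Fintype V] {G : SimpleGraph V} {S : Finset V} :
    S ∈ subtrees G ↔ S.Nonempty ∧ (G.induce (S : Set V)).Connected := by
  simp [subtrees]

def valIco {n : ℕ} (a b : ℕ) : Finset (Fin n) := {x | a ≤ x.val ∧ x.val < b}

@[simp] lemma mem_valIco {n a b : ℕ} {x : Fin n} :
    x ∈ (valIco a b : Finset (Fin n)) ↔ a ≤ x.val ∧ x.val < b := by
  simp [valIco]

lemma card_valIco {n a b : ℕ} (h : b ≤ n) : #(valIco a b : Finset (Fin n)) = b - a := by
  rw [← Nat.card_Ico, ← card_map Fin.valEmbedding]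
  congr 1
  ext k
  simp only [mem_map, mem_valIco, Fin.valEmbedding_apply, mem_Ico]
  exact ⟨fun ⟨x, hx, hxk⟩ => hxk ▸ hx, fun hk => ⟨⟨k, by omega⟩, hk, rfl⟩⟩

lemma valIco_inj {n a b c d : ℕ} (hab : a < b) (hb : b ≤ n) (hcd : c < d) (hd : d ≤ n)
    (h : (valIco a b : Finset (Fin n)) = valIco c d) : a = c ∧ b = d := by
  have key (k : ℕ) (hk : k < n) : (a ≤ k ∧ k < b) ↔ (c ≤ k ∧ k < d) := by
    simpa using congrArg (⟨k, hk⟩ ∈ ·) h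
  have := key a; have := key c; have := key (b - 1); have := key (d - 1)
  omega

def intervalWithLeaves {n : ℕ} (p : (ℕ × ℕ) × (Finset (Fin n) × Finset (Fin n))) :
    Finset (Fin n) :=
  valIco p.1.1 p.1.2 ∪ p.2.1 ∪ p.2.2

namespace doubleBroom

variable {m s : ℕ}

lemma adj_iff {u v : Fin (m + 2 * s)} :
    (doubleBroom (m + 2 * s) s).Adj u v ↔ u.val ≠ v.val ∧
      ((u.val + 1 = v.val ∧ v.val < m) ∨ (v.val + 1 = u.val ∧ u.val < m) ∨
       (u.val = 0 ∧ m ≤ v.val ∧ v.val < m + s) ∨ (v.val = 0 ∧ m ≤ u.val ∧ u.val < m + s) ∨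
       (u.val = m - 1 ∧ m + s ≤ v.val) ∨ (v.val = m - 1 ∧ m + s ≤ u.val)) := by
  rw [doubleBroom, SimpleGraph.fromRel_adj, Nat.add_sub_cancel, Fin.ne_iff_vne]
  omega

lemma mem_of_mem_subtrees_of_le_of_le {S : Finset (Fin (m + 2 * s))}
    (hS : S ∈ subtrees (doubleBroom (m + 2 * s) s)) {u v x : Fin (m + 2 * s)} (hu : u ∈ S)
    (hv : v ∈ S) (hux : u.val ≤ x.val) (hxv : x.val ≤ v.val) (hvm : v.val < m) : x ∈ S := by
  rcases hux.eq_or_lt with hux | hux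
  · rwa [← Fin.ext hux]
  rcases hxv.eq_or_lt with hxv | hxv
  · rwa [Fin.ext hxv]
  obtain ⟨u', -, v', hv', hu'X, hv'X, hadj⟩ :=
    SimpleGraph.exists_adj_of_induce_preconnected (mem_subtrees.1 hS).2.preconnected hu hv
      (X := {w | w.val < x.val ∨ (m ≤ w.val ∧ w.val < m + s)}) (Or.inl hux) (by simp; omega)
  simp only [Set.mem_ofPred_eq] at hu'X hv'X
  rw [adj_iff] at hadj
  rwa [Fin.ext (show x.val = v'.val by omega)]

lemma exists_adj_mem_of_mem_subtrees {S : Finset (Fin (m + 2 * s))}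
    (hS : S ∈ subtrees (doubleBroom (m + 2 * s) s)) {x y : Fin (m + 2 * s)} (hx : x ∈ S)
    (hy : y ∈ S) (hxy : x ≠ y) : ∃ w ∈ S, (doubleBroom (m + 2 * s) s).Adj x w := by
  obtain ⟨_, -, w, hw, rfl, -, hadj⟩ :=
    SimpleGraph.exists_adj_of_induce_preconnected (mem_subtrees.1 hS).2.preconnected hx hy
      (X := {x}) rfl hxy.symm
  exact ⟨w, hw, hadj⟩

lemma exists_attachment_mem {S : Finset (Fin (m + 2 * s))}
    (hS : S ∈ subtrees (doubleBroom (m + 2 * s) s)) {x y : Fin (m + 2 * s)} (hx : x ∈ S)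
    (hy : y ∈ S) (hxm : m ≤ x.val) (hym : y.val < m) :
    ∃ w ∈ S, (x.val < m + s → w.val = 0) ∧ (m + s ≤ x.val → w.val = m - 1) := by
  obtain ⟨w, hw, hadj⟩ := exists_adj_mem_of_mem_subtrees hS hx hy (by rintro rfl; omega)
  rw [adj_iff] at hadj
  exact ⟨w, hw, by omega, by omega⟩

lemma exists_inter_eq_valIco {S : Finset (Fin (m + 2 * s))}
    (hS : S ∈ subtrees (doubleBroom (m + 2 * s) s)) (hP : (S ∩ valIco 0 m).Nonempty) :
    ∃ a c, a < c ∧ c ≤ m ∧ S ∩ valIco 0 m = valIco a c := by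
  obtain ⟨u, hu, hu_min⟩ := (S ∩ valIco 0 m).exists_min_image Fin.val hP
  obtain ⟨v, hv, hv_max⟩ := (S ∩ valIco 0 m).exists_max_image Fin.val hP
  simp only [mem_inter, mem_valIco] at hu hv hu_min hv_max
  have huv := hu_min v hv
  refine ⟨u.val, v.val + 1, by omega, by omega, ?_⟩
  ext x
  simp only [mem_inter, mem_valIco]
  refine ⟨fun hx => ⟨hu_min x hx, Nat.lt_succ_of_le (hv_max x hx)⟩, fun ⟨hux, hxv⟩ => ?_⟩
  exact ⟨mem_of_mem_subtrees_of_le_of_le hS hu.1 hv.1 hux (by omega) hv.2.2, by omega, by omega⟩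

lemma induce_valIco_connected {a c : ℕ} (hac : a < c) (hc : c ≤ m) :
    ((doubleBroom (m + 2 * s) s).induce (valIco a c : Finset (Fin (m + 2 * s)))).Connected := by
  induction c, hac using Nat.le_induction with
  | base =>
    have : ((valIco a (a + 1) : Finset (Fin (m + 2 * s))) : Set (Fin (m + 2 * s))) =
        {⟨a, by omega⟩} := by
      ext x; simp [Fin.ext_iff]; omega
    rw [this]
    exact .of_subsingleton
  | succ c hac ih =>
    have : ((valIco a (c + 1) : Finset (Fin (m + 2 * s))) : Set (Fin (m + 2 * s))) =
        ↑(valIco a c : Finset (Fin (m + 2 * s))) ∪ {⟨c, by omega⟩} := by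
      ext x; simp [Fin.ext_iff]; omega
    rw [this]
    refine SimpleGraph.induce_union_connected_of_forall_exists_adj (ih (by omega)) ?_
    rintro v rfl
    exact ⟨⟨c - 1, by omega⟩, by simp; omega, by rw [adj_iff]; simp; omega⟩

lemma valIco_union_mem_subtrees {a c : ℕ} {A B : Finset (Fin (m + 2 * s))} (hac : a < c)
    (hc : c ≤ m) (hA : A ⊆ valIco m (m + s)) (hB : B ⊆ valIco (m + s) (m + 2 * s))
    (hA₀ : a ≠ 0 → A = ∅) (hBm : c ≠ m → B = ∅) :
    valIco a c ∪ A ∪ B ∈ subtrees (doubleBroom (m + 2 * s) s) := by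
  refine mem_subtrees.2 ⟨⟨⟨a, by omega⟩, by simp [hac]⟩, ?_⟩
  rw [union_assoc, coe_union]
  refine SimpleGraph.induce_union_connected_of_forall_exists_adj (induce_valIco_connected hac hc) ?_
  intro v hv
  rcases mem_union.1 hv with hv | hv
  · have := mem_valIco.1 (hA hv)
    obtain rfl : a = 0 := by_contra fun h => by simp [hA₀ h] at hv
    exact ⟨⟨0, by omega⟩, by simp; omega, by rw [adj_iff]; simp; omega⟩
  · have := mem_valIco.1 (hB hv)
    obtain rfl : c = m := by_contra fun h => by simp [hBm h] at hv
    exact ⟨⟨c - 1, by omega⟩, by simp; omega, by rw [adj_iff]; simp; omega⟩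

/-- The four pieces parametrise the subtrees that contain both ends of the path, only the end `0`,
only the end `m - 1`, and neither end. -/
def subtreeParams (m s : ℕ) :
    Finset ((ℕ × ℕ) × (Finset (Fin (m + 2 * s)) × Finset (Fin (m + 2 * s)))) :=
  {(0, m)} ×ˢ ((valIco m (m + s)).powerset ×ˢ (valIco (m + s) (m + 2 * s)).powerset) ∪
  ({0} ×ˢ Icc 1 (m - 1)) ×ˢ ((valIco m (m + s)).powerset ×ˢ {∅}) ∪
  (Icc 1 (m - 1) ×ˢ {m}) ×ˢ ({∅} ×ˢ (valIco (m + s) (m + 2 * s)).powerset) ∪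
  {x ∈ Icc 1 (m - 1) ×ˢ Icc 1 (m - 1) | x.1 < x.2} ×ˢ {(∅, ∅)}

lemma mem_subtreeParams {a c : ℕ} {A B : Finset (Fin (m + 2 * s))} (hm : 0 < m) :
    ((a, c), (A, B)) ∈ subtreeParams m s ↔ a < c ∧ c ≤ m ∧ A ⊆ valIco m (m + s) ∧
      B ⊆ valIco (m + s) (m + 2 * s) ∧ (a ≠ 0 → A = ∅) ∧ (c ≠ m → B = ∅) := by
  simp only [subtreeParams, mem_union, mem_product, mem_singleton, mem_powerset, mem_filter,
    mem_Icc, Prod.mk.injEq]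
  by_cases ha : a = 0 <;> by_cases hc : c = m <;> simp [ha, hc] <;> grind [empty_subset]

lemma card_subtreeParams :
    #(subtreeParams m s) =
      2 ^ s * 2 ^ s + (m - 1) * 2 ^ s + (m - 1) * 2 ^ s + (m - 1).choose 2 := by
  rw [subtreeParams, card_union_of_disjoint, card_union_of_disjoint, card_union_of_disjoint]
  · simp [card_valIco le_rfl, card_valIco (show m + s ≤ m + 2 * s by omega),
      card_product_filter_lt, show m + 2 * s - (m + s) = s by omega]
  all_goals
    simp only [disjoint_left, Prod.forall, mem_union, mem_product, mem_singleton, mem_Icc,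
      mem_filter, Prod.mk.injEq]
    omega

lemma intervalWithLeaves_inter {a c : ℕ} {A B : Finset (Fin (m + 2 * s))} (hc : c ≤ m)
    (hA : A ⊆ valIco m (m + s)) (hB : B ⊆ valIco (m + s) (m + 2 * s)) :
    intervalWithLeaves ((a, c), (A, B)) ∩ valIco 0 m = valIco a c ∧
      intervalWithLeaves ((a, c), (A, B)) ∩ valIco m (m + s) = A ∧
      intervalWithLeaves ((a, c), (A, B)) ∩ valIco (m + s) (m + 2 * s) = B := by
  refine ⟨?_, ?_, ?_⟩ <;> ext x <;> have := @hA x <;> have := @hB x <;>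
    by_cases x ∈ A <;> by_cases x ∈ B <;> simp_all [intervalWithLeaves] <;> omega

lemma intervalWithLeaves_injOn (hm : 0 < m) :
    Set.InjOn (intervalWithLeaves (n := m + 2 * s)) ↑(subtreeParams m s) := by
  rintro ⟨⟨a, c⟩, A, B⟩ hp ⟨⟨a', c'⟩, A', B'⟩ hq h
  obtain ⟨hac, hc, hA, hB, -⟩ := (mem_subtreeParams hm).1 hp
  obtain ⟨hac', hc', hA', hB', -⟩ := (mem_subtreeParams hm).1 hq
  obtain ⟨hP, hL, hR⟩ := intervalWithLeaves_inter (a := a) hc hA hB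
  obtain ⟨hP', hL', hR'⟩ := intervalWithLeaves_inter (a := a') hc' hA' hB'
  obtain ⟨rfl, rfl⟩ := valIco_inj hac (by omega) hac' (by omega) (hP.symm.trans (h ▸ hP'))
  obtain rfl : A = A' := hL.symm.trans (by rw [h, hL'])
  obtain rfl : B = B' := hR.symm.trans (by rw [h, hR'])
  rfl

lemma filter_subtrees_inter_path_nonempty (hm : 0 < m) :
    {S ∈ subtrees (doubleBroom (m + 2 * s) s) | (S ∩ valIco 0 m).Nonempty} =
      (subtreeParams m s).image intervalWithLeaves := by
  ext S
  simp only [mem_filter, mem_image]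
  constructor
  · rintro ⟨hS, hP⟩
    obtain ⟨a, c, hac, hc, hSP⟩ := exists_inter_eq_valIco hS hP
    obtain ⟨y, hy⟩ := hP
    simp only [mem_inter, mem_valIco] at hy
    have mem_interval {w} (hw : w ∈ S) (hwm : w.val < m) : a ≤ w.val ∧ w.val < c := by
      have h := mem_inter.2 ⟨hw, mem_valIco.2 ⟨Nat.zero_le w.val, hwm⟩⟩
      rwa [hSP, mem_valIco] at h
    refine ⟨((a, c), (S ∩ valIco m (m + s), S ∩ valIco (m + s) (m + 2 * s))),
      (mem_subtreeParams hm).2 ⟨hac, hc, inter_subset_right, inter_subset_right, ?_, ?_⟩, ?_⟩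
    · refine fun ha => eq_empty_of_forall_notMem fun x hx => ?_
      simp only [mem_inter, mem_valIco] at hx
      obtain ⟨w, hw, hw₀, -⟩ := exists_attachment_mem hS hx.1 hy.1 hx.2.1 hy.2.2
      have := mem_interval hw (by omega)
      omega
    · refine fun hcm => eq_empty_of_forall_notMem fun x hx => ?_
      simp only [mem_inter, mem_valIco] at hx
      obtain ⟨w, hw, -, hwm⟩ := exists_attachment_mem hS hx.1 hy.1 (by omega) hy.2.2
      have := mem_interval hw (by omega)
      omega
    · rw [intervalWithLeaves, ← hSP]
      ext x
      by_cases hx : x ∈ S <;> simp [hx]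
      omega
  · rintro ⟨⟨⟨a, c⟩, A, B⟩, hp, rfl⟩
    obtain ⟨hac, hc, hA, hB, hA₀, hBm⟩ := (mem_subtreeParams hm).1 hp
    exact ⟨valIco_union_mem_subtrees hac hc hA hB hA₀ hBm,
      ⟨a, by omega⟩, by simp [intervalWithLeaves]; omega⟩

lemma filter_subtrees_inter_path_empty (hm : 0 < m) :
    {S ∈ subtrees (doubleBroom (m + 2 * s) s) | ¬(S ∩ valIco 0 m).Nonempty} =
      (valIco m (m + 2 * s)).map ⟨({·}), singleton_injective⟩ := by
  ext S
  simp only [mem_filter, mem_map, Function.Embedding.coeFn_mk, not_nonempty_iff_eq_empty,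
    eq_empty_iff_forall_notMem, mem_inter, mem_valIco, not_and, not_lt, zero_le, true_implies]
  constructor
  · rintro ⟨hS, hP⟩
    obtain ⟨x, hx⟩ := (mem_subtrees.1 hS).1
    refine ⟨x, ⟨hP x hx, x.isLt⟩, (eq_singleton_iff_unique_mem.2 ⟨hx, fun y hy => ?_⟩).symm⟩
    by_contra hyx
    obtain ⟨w, hw, hadj⟩ := exists_adj_mem_of_mem_subtrees hS hx hy (Ne.symm hyx)
    have := hP x hx
    have := hP w hw
    rw [adj_iff] at hadj
    omega
  · rintro ⟨x, hx, rfl⟩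
    refine ⟨mem_subtrees.2 ⟨singleton_nonempty x, ?_⟩, fun y hy => by simp at hy; omega⟩
    rw [coe_singleton]
    exact .of_subsingleton

end doubleBroom

theorem stmt11_general (n s : ℕ) (hn : 2 * s + 2 ≤ n) :
    (subtrees (doubleBroom n s)).card =
      2 ^ (2 * s) + 2 ^ (s + 1) * (n - 2 * s - 1) + (n - 2 * s - 1).choose 2 + 2 * s := by
  obtain ⟨m, rfl⟩ : ∃ m, n = m + 2 * s := ⟨n - 2 * s, by omega⟩
  have hm : 0 < m := by omega
  rw [← card_filter_add_card_filter_not (fun S => (S ∩ valIco 0 m).Nonempty),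
    doubleBroom.filter_subtrees_inter_path_nonempty hm,
    doubleBroom.filter_subtrees_inter_path_empty hm,
    card_image_of_injOn (doubleBroom.intervalWithLeaves_injOn hm), card_map,
    doubleBroom.card_subtreeParams, card_valIco le_rfl, Nat.add_sub_cancel,
    Nat.add_sub_cancel_left]
  ring

/-- For the double-broom consisting of a path with `n − 2s` vertices and `s` pendant
leaves at each endpoint (`s ≥ 1`, `n − 2s ≥ 2`), the total number of subtrees equals
`2^{2s} + 2^{s+1}(n − 2s − 1) + C(n−2s−1, 2) + 2s`. -/
theorem stmt11 (n s : ℕ) (hs : 1 ≤ s) (hn : 2 * s + 2 ≤ n) :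
    (subtrees (doubleBroom n s)).card =
      2 ^ (2 * s) + 2 ^ (s + 1) * (n - 2 * s - 1) + (n - 2 * s - 1).choose 2 + 2 * s :=
  stmt11_general n s hn
end

section
/- Let T be a tree on n vertices and r a vertex contained in more than half of all subtrees of T. Then μ_T ≤ μ_T(r) = n − Δ(T) ≤ n − (1/2)·log₂ σ(T) + 1/2, where σ(T) is the total number of subtrees of T. -/
open scoped Classical

/-!
Cut a tree along an edge `u c` into the side `s₁` of `u` and the side `s₂` of `c`. A subtree
through `u` is a subtree through `u` inside `s₁`, possibly joined with a subtree through `c`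
inside `s₂`; any other subtree lies inside `s₁`, inside `s₂`, or is such a join. Writing `m, a`
for the number and total size of the subtrees through the root and `t, τ` for those of all
subtrees, this gives
  `m = m₁ (1 + m₂)`,  `a = (1 + m₂) a₁ + m₁ a₂`,
  `t = t₁ + t₂ + m₁ m₂`,  `τ = τ₁ + τ₂ + m₂ a₁ + m₁ a₂`.
Induction over such cuts yields `τ m ≤ a t`, i.e. `μ_T ≤ μ_T(r)`, and the defect bound
`m log₂ m ≤ 2 (n m - a)`; the inductive step for the latter only needs `m₂ + 1 ≤ 2 ^ n₂` and
`(m - 1) log (m + 1) ≤ m log m`. Finally `σ(T) < 2 s(T)` costs at most `1/2` in the logarithm.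
-/

namespace SimpleGraph

variable {V : Type*} {G : SimpleGraph V}

theorem exists_adj_of_induce_connected {S P : Set V} (hS : (G.induce S).Connected) {a b : V}
    (ha : a ∈ S) (haP : a ∈ P) (hb : b ∈ S) (hbP : b ∉ P) :
    ∃ x ∈ S, x ∈ P ∧ ∃ y ∈ S, y ∉ P ∧ G.Adj x y := by
  obtain ⟨p⟩ := hS.preconnected ⟨a, ha⟩ ⟨b, hb⟩
  obtain ⟨d, -, hd₁, hd₂⟩ := p.exists_boundary_dart {x | x.1 ∈ P} haP hbP
  exact ⟨d.fst, d.fst.2, hd₁, d.snd, d.snd.2, hd₂, d.adj⟩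

theorem induce_inter_connected {S P : Set V} (hS : (G.induce S).Connected) {u : V}
    (hu : u ∈ S) (huP : u ∈ P)
    (hP : ∀ a ∈ S, a ∈ P → ∀ b ∈ S, b ∉ P → G.Adj a b → a = u) :
    (G.induce (S ∩ P)).Connected := by
  have reach : ∀ {x y : S} (p : (G.induce S).Walk x y), y.1 = u → ∀ hx : x.1 ∈ P,
      (G.induce (S ∩ P)).Reachable ⟨x, x.2, hx⟩ ⟨u, hu, huP⟩ := by
    intro x y p
    induction p with
    | nil => rintro rfl _; rfl
    | @cons x z y hxz p ih =>
      intro hy hx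
      by_cases hz : z.1 ∈ P
      · exact (Adj.reachable (G := G.induce (S ∩ P)) (u := ⟨x, x.2, hx⟩) (v := ⟨z, z.2, hz⟩)
          hxz).trans (ih hy hz)
      · obtain rfl := hP x x.2 hx z z.2 hz hxz
        rfl
  rw [connected_iff_exists_forall_reachable]
  refine ⟨⟨u, hu, huP⟩, fun ⟨x, hxS, hxP⟩ => ?_⟩
  obtain ⟨p⟩ := hS.preconnected ⟨x, hxS⟩ ⟨u, hu⟩
  exact (reach p rfl hxP).symm

structure IsEdgeSplit (G : SimpleGraph V) (s₁ s₂ : Finset V) (u c : V) : Prop where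
  disjoint : Disjoint s₁ s₂
  left_mem : u ∈ s₁
  right_mem : c ∈ s₂
  adj : G.Adj u c
  eq_of_adj : ∀ ⦃a b⦄, a ∈ s₁ → b ∈ s₂ → G.Adj a b → a = u ∧ b = c

namespace IsEdgeSplit

variable {s₁ s₂ S : Finset V} {u c : V}

theorem mem_of_connected (h : G.IsEdgeSplit s₁ s₂ u c) (hS : (G.induce (S : Set V)).Connected)
    (hSs : S ⊆ s₁ ∪ s₂) {a b : V} (ha : a ∈ S) (ha₁ : a ∈ s₁) (hb : b ∈ S) (hb₂ : b ∈ s₂) :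
    u ∈ S ∧ c ∈ S := by
  obtain ⟨x, hx, hx₁, y, hy, hy₁, hxy⟩ := exists_adj_of_induce_connected (P := (s₁ : Set V)) hS
    ha ha₁ hb (Finset.disjoint_right.1 h.disjoint hb₂)
  have hy₂ : y ∈ s₂ := (Finset.mem_union.1 (hSs hy)).resolve_left hy₁
  obtain ⟨rfl, rfl⟩ := h.eq_of_adj hx₁ hy₂ hxy
  exact ⟨hx, hy⟩

theorem connected_inter_left (h : G.IsEdgeSplit s₁ s₂ u c)
    (hS : (G.induce (S : Set V)).Connected) (hSs : S ⊆ s₁ ∪ s₂) (hu : u ∈ S) :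
    (G.induce ((S ∩ s₁ : Finset V) : Set V)).Connected := by
  rw [Finset.coe_inter]
  refine induce_inter_connected hS hu h.left_mem fun a _ ha₁ b hb hb₁ hab => ?_
  exact (h.eq_of_adj ha₁ ((Finset.mem_union.1 (hSs hb)).resolve_left hb₁) hab).1

theorem connected_inter_right (h : G.IsEdgeSplit s₁ s₂ u c)
    (hS : (G.induce (S : Set V)).Connected) (hSs : S ⊆ s₁ ∪ s₂) (hc : c ∈ S) :
    (G.induce ((S ∩ s₂ : Finset V) : Set V)).Connected := by
  rw [Finset.coe_inter]
  refine induce_inter_connected hS hc h.right_mem fun a _ ha₂ b hb hb₂ hab => ?_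
  exact (h.eq_of_adj ((Finset.mem_union.1 (hSs hb)).resolve_right hb₂) ha₂ hab.symm).2

end IsEdgeSplit

theorem IsAcyclic.exists_isEdgeSplit (hG : G.IsAcyclic) {s : Finset V}
    (hs : (G.induce (s : Set V)).Connected) {u c : V} (hu : u ∈ s) (hc : c ∈ s)
    (huc : G.Adj u c) :
    ∃ s₁ s₂, G.IsEdgeSplit s₁ s₂ u c ∧ s₁ ∪ s₂ = s ∧ (G.induce (s₁ : Set V)).Connected ∧
      (G.induce (s₂ : Set V)).Connected := by
  -- `P` is the side of `u` once the bridge `u c` is deleted.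
  let P : Set V := {x | (G.deleteEdges {s(u, c)}).Reachable u x}
  have hcP : c ∉ P := isAcyclic_iff_forall_adj_isBridge.1 hG huc
  have cut : ∀ ⦃a b⦄, a ∈ P → b ∉ P → G.Adj a b → a = u ∧ b = c := by
    intro a b ha hb hab
    by_contra hne
    refine hb (ha.trans (Adj.reachable (deleteEdges_adj.2 ⟨hab, ?_⟩)))
    intro hab'
    rcases Sym2.eq_iff.1 hab' with ⟨rfl, rfl⟩ | ⟨rfl, -⟩
    · exact hne ⟨rfl, rfl⟩
    · exact hcP ha
  refine ⟨s.filter (· ∈ P), s.filter (· ∉ P), ⟨Finset.disjoint_filter_filter_not _ _ _,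
    Finset.mem_filter.2 ⟨hu, Reachable.refl u⟩, Finset.mem_filter.2 ⟨hc, hcP⟩, huc,
    fun a b ha hb => cut (Finset.mem_filter.1 ha).2 (Finset.mem_filter.1 hb).2⟩,
    Finset.filter_union_filter_not_eq _ _, ?_, ?_⟩
  · rw [Finset.coe_filter]
    exact induce_inter_connected hs hu (Reachable.refl u) fun a _ ha b _ hb hab =>
      (cut ha hb hab).1
  · rw [Finset.coe_filter]
    exact induce_inter_connected (P := Pᶜ) hs hc hcP fun a _ ha b _ hb hab =>
      (cut (not_not.1 hb) ha hab.symm).2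

@[elab_as_elim]
theorem IsAcyclic.induction_on_connected (hG : G.IsAcyclic) {p : Finset V → V → Prop}
    (singleton : ∀ u, p {u} u)
    (split : ∀ s₁ s₂ u c, G.IsEdgeSplit s₁ s₂ u c → (G.induce (s₁ : Set V)).Connected →
      (G.induce (s₂ : Set V)).Connected → p s₁ u → p s₂ c → p (s₁ ∪ s₂) u)
    {s : Finset V} (hs : (G.induce (s : Set V)).Connected) {u : V} (hu : u ∈ s) : p s u := by
  induction s using Finset.strongInduction generalizing u with
  | H s ih =>
  by_cases hsu : s = {u}
  · exact hsu ▸ singleton u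
  obtain ⟨b, hb, hbu⟩ : ∃ b ∈ s, b ≠ u := by
    by_contra! h
    exact hsu (Finset.eq_singleton_iff_unique_mem.2 ⟨hu, h⟩)
  obtain ⟨x, -, hx, c, hc, -, hxc⟩ :=
    exists_adj_of_induce_connected (P := {u}) hs hu rfl hb hbu
  have huc : G.Adj u c := hx ▸ hxc
  obtain ⟨s₁, s₂, hsplit, rfl, h₁, h₂⟩ := hG.exists_isEdgeSplit hs hu hc huc
  have hs₁ : s₁ ⊂ s₁ ∪ s₂ := (Finset.ssubset_iff_of_subset Finset.subset_union_left).2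
    ⟨c, hc, Finset.disjoint_right.1 hsplit.disjoint hsplit.right_mem⟩
  have hs₂ : s₂ ⊂ s₁ ∪ s₂ := (Finset.ssubset_iff_of_subset Finset.subset_union_right).2
    ⟨u, hu, Finset.disjoint_left.1 hsplit.disjoint hsplit.left_mem⟩
  exact split s₁ s₂ u c hsplit h₁ h₂ (ih s₁ hs₁ h₁ hsplit.left_mem)
    (ih s₂ hs₂ h₂ hsplit.right_mem)

end SimpleGraph

open Finset Real
open scoped FinsetFamily

namespace Finset

variable {α : Type*} {s₁ s₂ : Finset α} {F₁ F₂ : Finset (Finset α)}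

theorem injOn_sup_of_disjoint (hs : Disjoint s₁ s₂) :
    Set.InjOn (Function.uncurry (· ⊔ ·)) {p : Finset α × Finset α | p.1 ⊆ s₁ ∧ p.2 ⊆ s₂} := by
  have parts : ∀ {X₁ X₂ : Finset α}, X₁ ⊆ s₁ → X₂ ⊆ s₂ →
      (X₁ ⊔ X₂) ∩ s₁ = X₁ ∧ (X₁ ⊔ X₂) ∩ s₂ = X₂ := fun h₁ h₂ => by
    rw [sup_eq_union, union_inter_distrib_right, union_inter_distrib_right,
      inter_eq_left.2 h₁, inter_eq_left.2 h₂, disjoint_iff_inter_eq_empty.1 (hs.mono_left h₁),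
      disjoint_iff_inter_eq_empty.1 (hs.symm.mono_left h₂), union_empty, empty_union]
    exact ⟨rfl, rfl⟩
  rintro ⟨A₁, A₂⟩ ⟨hA₁ : A₁ ⊆ s₁, hA₂ : A₂ ⊆ s₂⟩ ⟨B₁, B₂⟩ ⟨hB₁ : B₁ ⊆ s₁, hB₂ : B₂ ⊆ s₂⟩
    (h : A₁ ⊔ A₂ = B₁ ⊔ B₂)
  exact Prod.ext ((parts hA₁ hA₂).1.symm.trans (by rw [h, (parts hB₁ hB₂).1]))
    ((parts hA₁ hA₂).2.symm.trans (by rw [h, (parts hB₁ hB₂).2]))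

variable (hs : Disjoint s₁ s₂) (h₁ : ∀ S ∈ F₁, S ⊆ s₁) (h₂ : ∀ S ∈ F₂, S ⊆ s₂)
include hs h₁ h₂

theorem card_sups_of_disjoint : #(F₁ ⊻ F₂) = #F₁ * #F₂ :=
  card_image₂_iff.2 <| (injOn_sup_of_disjoint hs).mono fun p hp => by
    simp only [Set.mem_ofPred_eq]
    exact ⟨h₁ _ (Set.mem_prod.1 hp).1, h₂ _ (Set.mem_prod.1 hp).2⟩

theorem sum_card_sups_of_disjoint :
    ∑ S ∈ F₁ ⊻ F₂, #S = #F₂ * ∑ S ∈ F₁, #S + #F₁ * ∑ S ∈ F₂, #S := by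
  change ∑ S ∈ image₂ (· ⊔ ·) F₁ F₂, #S = _
  rw [← image_uncurry_product, sum_image fun p hp q hq => (injOn_sup_of_disjoint hs)
    ⟨h₁ _ (mem_product.1 hp).1, h₂ _ (mem_product.1 hp).2⟩
    ⟨h₁ _ (mem_product.1 hq).1, h₂ _ (mem_product.1 hq).2⟩, sum_product]
  have hcard : ∀ S₁ ∈ F₁, ∀ S₂ ∈ F₂, #(S₁ ⊔ S₂) = #S₁ + #S₂ := fun S₁ hS₁ S₂ hS₂ =>
    card_union_of_disjoint (hs.mono (h₁ S₁ hS₁) (h₂ S₂ hS₂))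
  simp only [Function.uncurry_apply_pair]
  rw [sum_congr rfl fun S₁ hS₁ => sum_congr rfl fun S₂ hS₂ => hcard S₁ hS₁ S₂ hS₂]
  simp only [sum_add_distrib, sum_const, smul_eq_mul, ← mul_sum]

end Finset

theorem Real.sub_one_mul_log_add_one_le {m : ℝ} (hm : 1 ≤ m) :
    (m - 1) * log (m + 1) ≤ m * log m := by
  have hm₀ : 0 < m := by linarith
  have hstep : log (m + 1) ≤ log m + m⁻¹ := by
    have h := log_le_sub_one_of_pos (x := (m + 1) / m) (by positivity)
    rw [log_div (by positivity) hm₀.ne', add_div, div_self hm₀.ne', one_div] at h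
    linarith
  calc (m - 1) * log (m + 1) ≤ (m - 1) * (log m + m⁻¹) :=
        mul_le_mul_of_nonneg_left hstep (by linarith)
    _ = (m - 1) * log m + (1 - m⁻¹) := by field_simp
    _ ≤ m * log m := by linarith [one_sub_inv_le_log_of_pos hm₀]

theorem Real.sub_one_mul_logb_add_one_le {b m : ℝ} (hb : 1 ≤ b) (hm : 1 ≤ m) :
    (m - 1) * logb b (m + 1) ≤ m * logb b m := by
  simp only [logb, ← mul_div_assoc]
  exact div_le_div_of_nonneg_right (sub_one_mul_log_add_one_le hm) (log_nonneg hb)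

-- `mᵢ, aᵢ`: number and total size of the subtrees through the root of side `i` of a cut,
-- `nᵢ`: the size of that side.
theorem defect_bound_step {m₁ m₂ n₁ n₂ a₁ a₂ : ℝ} (hm₁ : 1 ≤ m₁) (hm₂ : 1 ≤ m₂)
    (hn₂ : logb 2 (1 + m₂) ≤ n₂)
    (h₁ : m₁ * logb 2 m₁ ≤ 2 * (n₁ * m₁ - a₁)) (h₂ : m₂ * logb 2 m₂ ≤ 2 * (n₂ * m₂ - a₂)) :
    m₁ * (1 + m₂) * logb 2 (m₁ * (1 + m₂)) ≤
      2 * ((n₁ + n₂) * (m₁ * (1 + m₂)) - ((1 + m₂) * a₁ + m₁ * a₂)) := by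
  have hkey : (1 + m₂) * logb 2 (1 + m₂) ≤ m₂ * logb 2 m₂ + 2 * n₂ := by
    have := sub_one_mul_logb_add_one_le one_le_two hm₂
    rw [add_comm m₂] at this
    linarith
  rw [logb_mul (by positivity) (by positivity)]
  linarith [mul_le_mul_of_nonneg_left h₁ (by linarith : (0 : ℝ) ≤ 1 + m₂),
    mul_le_mul_of_nonneg_left (hkey.trans (add_le_add_left h₂ _))
      (by linarith : (0 : ℝ) ≤ m₁)]

-- As above, with `tᵢ, τᵢ` the number and total size of all subtrees of side `i`.
theorem mean_bound_step {m₁ m₂ a₁ a₂ t₁ t₂ τ₁ τ₂ : ℕ} (h₁ : τ₁ * m₁ ≤ a₁ * t₁)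
    (h₂ : τ₂ * m₂ ≤ a₂ * t₂) (hmt : m₁ ≤ t₁) (hma : m₁ ≤ a₁) (hτ : τ₂ ≤ m₂ * t₂) :
    (τ₁ + τ₂ + (m₂ * a₁ + m₁ * a₂)) * (m₁ * (1 + m₂)) ≤
      ((1 + m₂) * a₁ + m₁ * a₂) * (t₁ + t₂ + m₁ * m₂) := by
  have e₁ := Nat.mul_le_mul_left (1 + m₂) h₁
  have e₂ := Nat.mul_le_mul_left m₁ h₂
  have e₃ : m₁ * τ₂ ≤ a₁ * (m₂ * t₂) := Nat.mul_le_mul hma hτ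
  have e₄ := Nat.mul_le_mul_left (m₁ * a₂) hmt
  linarith [Nat.zero_le (a₁ * t₂)]

section Subtrees

variable {V : Type*} [Fintype V] {G : SimpleGraph V} {s s₁ s₂ S : Finset V} {u c r : V}

noncomputable def subtreesIn (G : SimpleGraph V) (s : Finset V) : Finset (Finset V) :=
  (subtrees G).filter (· ⊆ s)

noncomputable def subtreesThroughIn (G : SimpleGraph V) (s : Finset V) (r : V) :
    Finset (Finset V) :=
  (subtreesThrough G r).filter (· ⊆ s)

@[simp]
theorem mem_subtreesIn :
    S ∈ subtreesIn G s ↔ (S.Nonempty ∧ (G.induce (S : Set V)).Connected) ∧ S ⊆ s := by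
  simp [subtreesIn, subtrees]

@[simp]
theorem mem_subtreesThroughIn :
    S ∈ subtreesThroughIn G s r ↔ (r ∈ S ∧ (G.induce (S : Set V)).Connected) ∧ S ⊆ s := by
  simp [subtreesThroughIn, subtreesThrough]

theorem subtreesIn_univ : subtreesIn G univ = subtrees G :=
  filter_true_of_mem fun _ _ => subset_univ _

theorem subtreesThroughIn_univ : subtreesThroughIn G univ r = subtreesThrough G r :=
  filter_true_of_mem fun _ _ => subset_univ _

theorem subtreesThroughIn_subset_subtreesIn : subtreesThroughIn G s r ⊆ subtreesIn G s :=
  fun S hS => by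
    rw [mem_subtreesThroughIn] at hS
    exact mem_subtreesIn.2 ⟨⟨⟨r, hS.1.1⟩, hS.1.2⟩, hS.2⟩

theorem subtreesIn_mono (hst : s₁ ⊆ s₂) : subtreesIn G s₁ ⊆ subtreesIn G s₂ :=
  fun S hS => by
    rw [mem_subtreesIn] at hS ⊢
    exact ⟨hS.1, hS.2.trans hst⟩

theorem subtreesThroughIn_singleton : subtreesThroughIn G {u} u = {{u}} := by
  ext S
  simp only [mem_subtreesThroughIn, mem_singleton]
  constructor
  · rintro ⟨⟨hu, -⟩, hS⟩
    exact Subset.antisymm hS (singleton_subset_iff.2 hu)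
  · rintro rfl
    exact ⟨⟨mem_singleton_self u, by rw [coe_singleton]; simp⟩, Subset.rfl⟩

theorem subtreesIn_singleton : subtreesIn G {u} = {{u}} := by
  ext S
  simp only [mem_subtreesIn, mem_singleton]
  constructor
  · rintro ⟨⟨hne, -⟩, hS⟩
    exact (subset_singleton_iff.1 hS).resolve_left hne.ne_empty
  · rintro rfl
    exact ⟨⟨singleton_nonempty u, by rw [coe_singleton]; simp⟩, Subset.rfl⟩

namespace SimpleGraph.IsEdgeSplit

variable (h : G.IsEdgeSplit s₁ s₂ u c)
include h

theorem subtreesThroughIn_union :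
    subtreesThroughIn G (s₁ ∪ s₂) u =
      subtreesThroughIn G s₁ u ∪ subtreesThroughIn G s₁ u ⊻ subtreesThroughIn G s₂ c := by
  ext S
  simp only [mem_union, mem_sups, mem_subtreesThroughIn]
  constructor
  · rintro ⟨⟨hu, hS⟩, hSs⟩
    by_cases hS₂ : (S ∩ s₂).Nonempty
    · obtain ⟨b, hb⟩ := hS₂
      have hc := (h.mem_of_connected hS hSs hu h.left_mem (mem_inter.1 hb).1
        (mem_inter.1 hb).2).2
      refine Or.inr ⟨S ∩ s₁, ⟨⟨mem_inter.2 ⟨hu, h.left_mem⟩, h.connected_inter_left hS hSs hu⟩,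
        inter_subset_right⟩, S ∩ s₂, ⟨⟨mem_inter.2 ⟨hc, h.right_mem⟩,
        h.connected_inter_right hS hSs hc⟩, inter_subset_right⟩, ?_⟩
      rw [sup_eq_union, ← inter_union_distrib_left, inter_eq_left.2 hSs]
    · refine Or.inl ⟨⟨hu, hS⟩, fun x hx => ?_⟩
      exact (mem_union.1 (hSs hx)).resolve_right fun hx₂ => hS₂ ⟨x, mem_inter.2 ⟨hx, hx₂⟩⟩
  · rintro (⟨hS, hSs⟩ | ⟨S₁, ⟨⟨hu, hS₁⟩, hS₁s⟩, S₂, ⟨⟨hc, hS₂⟩, hS₂s⟩, rfl⟩)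
    · exact ⟨hS, hSs.trans subset_union_left⟩
    · refine ⟨⟨mem_union_left _ hu, ?_⟩, union_subset_union hS₁s hS₂s⟩
      rw [sup_eq_union, coe_union]
      exact SimpleGraph.connected_induce_union hS₁.preconnected hS₂.preconnected hu hc h.adj

theorem not_subset_of_mem_sups
    (hS : S ∈ subtreesThroughIn G s₁ u ⊻ subtreesThroughIn G s₂ c) : ¬S ⊆ s₁ ∧ ¬S ⊆ s₂ := by
  obtain ⟨S₁, hS₁, S₂, hS₂, rfl⟩ := mem_sups.1 hS
  have hu : u ∈ S₁ ⊔ S₂ := mem_union_left _ (mem_subtreesThroughIn.1 hS₁).1.1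
  have hc : c ∈ S₁ ⊔ S₂ := mem_union_right _ (mem_subtreesThroughIn.1 hS₂).1.1
  exact ⟨fun h₁ => Finset.disjoint_right.1 h.disjoint h.right_mem (h₁ hc),
    fun h₂ => Finset.disjoint_left.1 h.disjoint h.left_mem (h₂ hu)⟩

theorem subtreesIn_union :
    subtreesIn G (s₁ ∪ s₂) = subtreesIn G s₁ ∪ subtreesIn G s₂ ∪
      subtreesThroughIn G s₁ u ⊻ subtreesThroughIn G s₂ c := by
  ext S
  constructor
  · intro hS
    obtain ⟨⟨-, hconn⟩, hSs⟩ := mem_subtreesIn.1 hS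
    by_cases h₁ : S ⊆ s₁
    · exact mem_union_left _ (mem_union_left _ (mem_subtreesIn.2 ⟨(mem_subtreesIn.1 hS).1, h₁⟩))
    by_cases h₂ : S ⊆ s₂
    · exact mem_union_left _ (mem_union_right _ (mem_subtreesIn.2 ⟨(mem_subtreesIn.1 hS).1, h₂⟩))
    obtain ⟨a, ha, ha₂⟩ := not_subset.1 h₂
    obtain ⟨b, hb, hb₁⟩ := not_subset.1 h₁
    have hu := (h.mem_of_connected hconn hSs ha ((mem_union.1 (hSs ha)).resolve_right ha₂) hb
      ((mem_union.1 (hSs hb)).resolve_left hb₁)).1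
    have hSu : S ∈ subtreesThroughIn G (s₁ ∪ s₂) u := mem_subtreesThroughIn.2 ⟨⟨hu, hconn⟩, hSs⟩
    rw [h.subtreesThroughIn_union, mem_union] at hSu
    exact mem_union_right _ (hSu.resolve_left fun hS₁ => h₁ (mem_subtreesThroughIn.1 hS₁).2)
  · rw [mem_union, mem_union]
    rintro ((hS | hS) | hS)
    · exact subtreesIn_mono subset_union_left hS
    · exact subtreesIn_mono subset_union_right hS
    · refine subtreesThroughIn_subset_subtreesIn (r := u) ?_
      rw [h.subtreesThroughIn_union]
      exact mem_union_right _ hS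

theorem card_sups :
    #(subtreesThroughIn G s₁ u ⊻ subtreesThroughIn G s₂ c) =
      #(subtreesThroughIn G s₁ u) * #(subtreesThroughIn G s₂ c) :=
  card_sups_of_disjoint h.disjoint (fun _ hS => (mem_subtreesThroughIn.1 hS).2)
    (fun _ hS => (mem_subtreesThroughIn.1 hS).2)

theorem sum_card_sups :
    ∑ S ∈ subtreesThroughIn G s₁ u ⊻ subtreesThroughIn G s₂ c, #S =
      #(subtreesThroughIn G s₂ c) * ∑ S ∈ subtreesThroughIn G s₁ u, #S +
        #(subtreesThroughIn G s₁ u) * ∑ S ∈ subtreesThroughIn G s₂ c, #S :=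
  sum_card_sups_of_disjoint h.disjoint (fun _ hS => (mem_subtreesThroughIn.1 hS).2)
    (fun _ hS => (mem_subtreesThroughIn.1 hS).2)

theorem disjoint_subtreesThroughIn_sups :
    Disjoint (subtreesThroughIn G s₁ u) (subtreesThroughIn G s₁ u ⊻ subtreesThroughIn G s₂ c) :=
  Finset.disjoint_left.2 fun _ hS hS' =>
    (h.not_subset_of_mem_sups hS').1 (mem_subtreesThroughIn.1 hS).2

theorem disjoint_subtreesIn_sups :
    Disjoint (subtreesIn G s₁ ∪ subtreesIn G s₂)
      (subtreesThroughIn G s₁ u ⊻ subtreesThroughIn G s₂ c) :=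
  Finset.disjoint_left.2 fun _ hS hS' => (mem_union.1 hS).elim
    (fun hS => (h.not_subset_of_mem_sups hS').1 (mem_subtreesIn.1 hS).2)
    (fun hS => (h.not_subset_of_mem_sups hS').2 (mem_subtreesIn.1 hS).2)

theorem disjoint_subtreesIn : Disjoint (subtreesIn G s₁) (subtreesIn G s₂) :=
  Finset.disjoint_left.2 fun _ hS₁ hS₂ => by
    obtain ⟨x, hx⟩ := (mem_subtreesIn.1 hS₁).1.1
    exact Finset.disjoint_left.1 h.disjoint ((mem_subtreesIn.1 hS₁).2 hx)
      ((mem_subtreesIn.1 hS₂).2 hx)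

theorem card_subtreesThroughIn_union :
    #(subtreesThroughIn G (s₁ ∪ s₂) u) =
      #(subtreesThroughIn G s₁ u) * (1 + #(subtreesThroughIn G s₂ c)) := by
  rw [h.subtreesThroughIn_union, card_union_of_disjoint h.disjoint_subtreesThroughIn_sups,
    h.card_sups]
  ring

theorem sum_card_subtreesThroughIn_union :
    ∑ S ∈ subtreesThroughIn G (s₁ ∪ s₂) u, #S =
      (1 + #(subtreesThroughIn G s₂ c)) * ∑ S ∈ subtreesThroughIn G s₁ u, #S +
        #(subtreesThroughIn G s₁ u) * ∑ S ∈ subtreesThroughIn G s₂ c, #S := by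
  rw [h.subtreesThroughIn_union, sum_union h.disjoint_subtreesThroughIn_sups, h.sum_card_sups]
  ring

theorem card_subtreesIn_union :
    #(subtreesIn G (s₁ ∪ s₂)) = #(subtreesIn G s₁) + #(subtreesIn G s₂) +
      #(subtreesThroughIn G s₁ u) * #(subtreesThroughIn G s₂ c) := by
  rw [h.subtreesIn_union, card_union_of_disjoint h.disjoint_subtreesIn_sups,
    card_union_of_disjoint h.disjoint_subtreesIn, h.card_sups]

theorem sum_card_subtreesIn_union :
    ∑ S ∈ subtreesIn G (s₁ ∪ s₂), #S = ∑ S ∈ subtreesIn G s₁, #S + ∑ S ∈ subtreesIn G s₂, #S +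
      (#(subtreesThroughIn G s₂ c) * ∑ S ∈ subtreesThroughIn G s₁ u, #S +
        #(subtreesThroughIn G s₁ u) * ∑ S ∈ subtreesThroughIn G s₂ c, #S) := by
  rw [h.subtreesIn_union, sum_union h.disjoint_subtreesIn_sups,
    sum_union h.disjoint_subtreesIn, h.sum_card_sups]

end SimpleGraph.IsEdgeSplit

theorem card_subtreesThroughIn_pos (hu : u ∈ s) : 0 < #(subtreesThroughIn G s u) :=
  card_pos.2 ⟨{u}, mem_subtreesThroughIn.2
    ⟨⟨mem_singleton_self u, by rw [coe_singleton]; simp⟩, singleton_subset_iff.2 hu⟩⟩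

theorem card_subtreesThroughIn_le_card_subtreesIn :
    #(subtreesThroughIn G s u) ≤ #(subtreesIn G s) :=
  card_le_card subtreesThroughIn_subset_subtreesIn

theorem card_subtreesThroughIn_le_sum_card :
    #(subtreesThroughIn G s u) ≤ ∑ S ∈ subtreesThroughIn G s u, #S := by
  simpa using card_nsmul_le_sum _ _ 1 fun S hS =>
    one_le_card.2 ⟨u, (mem_subtreesThroughIn.1 hS).1.1⟩

theorem sum_card_subtreesIn_le : ∑ S ∈ subtreesIn G s, #S ≤ #s * #(subtreesIn G s) := by
  simpa [mul_comm] using sum_le_card_nsmul _ _ #s fun S hS => card_le_card (mem_subtreesIn.1 hS).2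

theorem logb_one_add_card_subtreesThroughIn_le :
    logb 2 (1 + #(subtreesThroughIn G s u)) ≤ #s := by
  have hsub : subtreesThroughIn G s u ⊆ s.powerset.erase ∅ := fun S hS => by
    obtain ⟨⟨hu, -⟩, hSs⟩ := mem_subtreesThroughIn.1 hS
    exact mem_erase.2 ⟨ne_empty_of_mem hu, mem_powerset.2 hSs⟩
  have hcard := card_le_card hsub
  rw [card_erase_of_mem (empty_mem_powerset s), card_powerset] at hcard
  rw [logb_le_iff_le_rpow one_lt_two (by positivity), rpow_natCast, add_comm]
  exact_mod_cast Nat.add_one_le_of_lt ((Nat.le_sub_one_iff_lt (Nat.two_pow_pos _)).1 hcard)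

namespace SimpleGraph.IsAcyclic

variable (hG : G.IsAcyclic) (hs : (G.induce (s : Set V)).Connected) (hu : u ∈ s)
include hG hs hu

theorem card_le_card_subtreesThroughIn : #s ≤ #(subtreesThroughIn G s u) := by
  refine hG.induction_on_connected (fun u => ?_) (fun s₁ s₂ u c h _ _ ih₁ ih₂ => ?_) hs hu
  · simp [subtreesThroughIn_singleton]
  · rw [card_union_of_disjoint h.disjoint, h.card_subtreesThroughIn_union]
    nlinarith [card_subtreesThroughIn_pos (G := G) h.left_mem]

theorem sum_card_subtreesIn_mul_le :
    (∑ S ∈ subtreesIn G s, #S) * #(subtreesThroughIn G s u) ≤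
      (∑ S ∈ subtreesThroughIn G s u, #S) * #(subtreesIn G s) := by
  refine hG.induction_on_connected (fun u => ?_) (fun s₁ s₂ u c h _ hs₂ ih₁ ih₂ => ?_) hs hu
  · simp [subtreesThroughIn_singleton, subtreesIn_singleton]
  · rw [h.sum_card_subtreesIn_union, h.card_subtreesThroughIn_union,
      h.sum_card_subtreesThroughIn_union, h.card_subtreesIn_union]
    exact mean_bound_step ih₁ ih₂ card_subtreesThroughIn_le_card_subtreesIn
      card_subtreesThroughIn_le_sum_card (sum_card_subtreesIn_le.trans
        (Nat.mul_le_mul_right _ (hG.card_le_card_subtreesThroughIn hs₂ h.right_mem)))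

theorem card_mul_logb_card_subtreesThroughIn_le :
    #(subtreesThroughIn G s u) * logb 2 #(subtreesThroughIn G s u) ≤
      2 * (#s * #(subtreesThroughIn G s u) - ∑ S ∈ subtreesThroughIn G s u, (#S : ℝ)) := by
  refine hG.induction_on_connected (fun u => ?_) (fun s₁ s₂ u c h _ _ ih₁ ih₂ => ?_) hs hu
  · simp [subtreesThroughIn_singleton]
  · rw [← Nat.cast_sum, card_union_of_disjoint h.disjoint, h.card_subtreesThroughIn_union,
      h.sum_card_subtreesThroughIn_union]
    push_cast
    exact defect_bound_step (by exact_mod_cast card_subtreesThroughIn_pos h.left_mem)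
      (by exact_mod_cast card_subtreesThroughIn_pos h.right_mem)
      (by exact_mod_cast logb_one_add_card_subtreesThroughIn_le) ih₁ ih₂

end SimpleGraph.IsAcyclic

end Subtrees

/-- Let `T` be a tree on `n` vertices and `r` a vertex contained in more than half of
all subtrees of `T`. Then `μ_T ≤ μ_T(r) = n − Δ(T) ≤ n − (1/2)·log₂ σ(T) + 1/2`. -/
theorem stmt15 {V : Type*} [Fintype V] (G : SimpleGraph V) (hG : G.IsTree) (r : V)
    (hr : (subtrees G).card < 2 * (subtreesThrough G r).card) :
    (∑ s ∈ subtrees G, (s.card : ℝ)) / (subtrees G).card ≤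
      (∑ s ∈ subtreesThrough G r, (s.card : ℝ)) / (subtreesThrough G r).card ∧
    (∑ s ∈ subtreesThrough G r, (s.card : ℝ)) / (subtreesThrough G r).card =
      (Fintype.card V : ℝ) -
        ((Fintype.card V : ℝ) -
          (∑ s ∈ subtreesThrough G r, (s.card : ℝ)) / (subtreesThrough G r).card) ∧
    (∑ s ∈ subtreesThrough G r, (s.card : ℝ)) / (subtreesThrough G r).card ≤
      (Fintype.card V : ℝ) - (1 / 2) * Real.logb 2 ((subtrees G).card) + 1 / 2 := by
  have hconn : (G.induce ((univ : Finset V) : Set V)).Connected := by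
    rw [coe_univ]
    exact G.induceUnivIso.connected_iff.2 hG.1
  rw [← subtreesIn_univ, ← subtreesThroughIn_univ] at hr ⊢
  rw [← card_univ]
  have hA : (0 : ℝ) < #(subtreesThroughIn G univ r) := by
    exact_mod_cast card_subtreesThroughIn_pos (mem_univ r)
  have hT : (0 : ℝ) < #(subtreesIn G univ) :=
    hA.trans_le (by exact_mod_cast card_subtreesThroughIn_le_card_subtreesIn)
  have hlog : logb 2 #(subtreesIn G univ) ≤ 1 + logb 2 #(subtreesThroughIn G univ r) := by
    rw [← logb_self_eq_one one_lt_two, ← logb_mul two_ne_zero hA.ne']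
    exact logb_le_logb_of_le one_lt_two hT (by exact_mod_cast hr.le)
  have defect := hG.2.card_mul_logb_card_subtreesThroughIn_le hconn (mem_univ r)
  refine ⟨?_, by ring, ?_⟩
  · rw [div_le_div_iff₀ hT hA]
    exact_mod_cast hG.2.sum_card_subtreesIn_mul_le hconn (mem_univ r)
  · rw [div_le_iff₀ hA]
    linarith [mul_le_mul_of_nonneg_left hlog hA.le]
end

section
/- Along any path in a tree T, the function v ↦ σ_v(T) counting subtrees of T containing v is unimodal: on any path from one vertex to another, its minimum over the path vertices is attained at one of the two endpoints. Consequently, for any threshold c, the set of vertices v with σ_v(T) ≥ c induces a connected subgraph of T. -/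
open scoped Classical

/-!
Write `σ_v` for the number of subtrees through `v` and `A(x, y)` for the number of those
through `x` avoiding `y`. For any `x, y`, splitting by whether the other vertex is present gives
`σ_x + A(y, x) = σ_y + A(x, y)`. For a path `x - y - z` in a tree, `s ↦ s ∪ {y}` injects the
subtrees through `x` avoiding `y` into those through `y` avoiding `z` (a subtree containing `x`
and `z` would contain `y`), so `A(x, y) ≤ A(y, z)` and symmetrically `A(z, y) ≤ A(y, x)`.
Together, `σ_x + σ_z ≤ 2 σ_y`: `σ` is concave along paths, so its minimum on a path is at an
endpoint, and the superlevel sets of `σ` contain the path between any two of their points.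
-/

namespace SimpleGraph

variable {V : Type*} {G : SimpleGraph V}

lemma IsAcyclic.support_subset_of_preconnected_induce (hG : G.IsAcyclic) {s : Set V}
    (hs : (G.induce s).Preconnected) {u w : V} (hu : u ∈ s) (hw : w ∈ s) {p : G.Walk u w}
    (hp : p.IsPath) : ∀ t ∈ p.support, t ∈ s := by
  obtain ⟨q⟩ := hs ⟨u, hu⟩ ⟨w, hw⟩
  set q' := q.map (Embedding.induce s).toHom
  have := hG.subsingleton_path u w
  have hpq : p = q'.bypass :=
    congrArg Subtype.val (Subsingleton.elim ⟨p, hp⟩ ⟨q'.bypass, q'.bypass_isPath⟩)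
  intro t ht
  have ht' : t ∈ q'.support := q'.support_bypass_subset_support (hpq ▸ ht)
  rw [Walk.support_map, List.mem_map] at ht'
  obtain ⟨x, -, rfl⟩ := ht'
  exact x.2

lemma induce_insert_connected {s : Set V} (hs : (G.induce s).Connected) {x y : V} (hx : x ∈ s)
    (hxy : G.Adj x y) : (G.induce (insert y s)).Connected := by
  have hunion : s ∪ {x, y} = insert y s := by
    ext t
    simp only [Set.mem_union, Set.mem_insert_iff, Set.mem_singleton_iff]
    constructor
    · rintro (h | rfl | rfl) <;> simp_all
    · tauto
  rw [← hunion]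
  exact induce_union_connected hs.preconnected (induce_pair_connected_of_adj hxy).preconnected
    ⟨x, hx, Set.mem_insert x {y}⟩

variable [Fintype V]

noncomputable def subtreesThroughAvoiding (G : SimpleGraph V) (x y : V) : Finset (Finset V) :=
  (subtreesThrough G x).filter (y ∉ ·)

lemma card_subtreesThrough_add_card_subtreesThroughAvoiding (x y : V) :
    (subtreesThrough G x).card + (subtreesThroughAvoiding G y x).card =
      (subtreesThrough G y).card + (subtreesThroughAvoiding G x y).card := by
  have hboth :
      (subtreesThrough G x).filter (y ∈ ·) = (subtreesThrough G y).filter (x ∈ ·) := by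
    ext s
    simp only [subtreesThrough, Finset.mem_filter, Finset.mem_univ, true_and]
    tauto
  rw [← Finset.card_filter_add_card_filter_not (s := subtreesThrough G x) (y ∈ ·),
    ← Finset.card_filter_add_card_filter_not (s := subtreesThrough G y) (x ∈ ·), hboth,
    subtreesThroughAvoiding, subtreesThroughAvoiding]
  ring

lemma card_subtreesThroughAvoiding_le (hG : G.IsAcyclic) {x y z : V} (hxy : G.Adj x y)
    (hyz : G.Adj y z) (hxz : x ≠ z) :
    (subtreesThroughAvoiding G x y).card ≤ (subtreesThroughAvoiding G y z).card := by
  refine Finset.card_le_card_of_injOn (insert y) (fun s hs => ?_) (fun s hs t ht hst => ?_)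
  · simp only [Finset.mem_coe, subtreesThroughAvoiding, subtreesThrough, Finset.mem_filter,
      Finset.mem_univ, true_and] at hs ⊢
    obtain ⟨⟨hxs, hconn⟩, hys⟩ := hs
    have hconn' : (G.induce ((insert y s : Finset V) : Set V)).Connected := by
      rw [Finset.coe_insert]
      exact induce_insert_connected hconn hxs hxy
    have hzs : z ∉ s := fun hzs => by
      have hpath : (Walk.cons hxy (Walk.cons hyz Walk.nil)).IsPath := by
        simp [Walk.cons_isPath_iff, hxy.ne, hyz.ne, hxz]
      exact hys (hG.support_subset_of_preconnected_induce hconn.preconnected hxs hzs hpath y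
        (by simp))
    exact ⟨⟨Finset.mem_insert_self y s, hconn'⟩, by simp [hyz.ne', hzs]⟩
  · simp only [Finset.mem_coe, subtreesThroughAvoiding, Finset.mem_filter] at hs ht
    rw [← Finset.erase_insert hs.2, ← Finset.erase_insert ht.2, hst]

theorem card_subtreesThrough_add_card_subtreesThrough_le (hG : G.IsAcyclic) {x y z : V}
    (hxy : G.Adj x y) (hyz : G.Adj y z) (hxz : x ≠ z) :
    (subtreesThrough G x).card + (subtreesThrough G z).card ≤
      2 * (subtreesThrough G y).card := by
  have hx := card_subtreesThrough_add_card_subtreesThroughAvoiding (G := G) x y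
  have hz := card_subtreesThrough_add_card_subtreesThroughAvoiding (G := G) z y
  have hxyz := card_subtreesThroughAvoiding_le hG hxy hyz hxz
  have hzyx := card_subtreesThroughAvoiding_le hG hyz.symm hxy.symm hxz.symm
  omega

/-- By concavity, once `σ` strictly decreases along a path it keeps decreasing. -/
lemma card_subtreesThrough_le_of_lt (hG : G.IsAcyclic) {u x v : V} (hux : G.Adj u x)
    (q : G.Walk x v) (hq : (q.cons hux).IsPath)
    (hlt : (subtreesThrough G x).card < (subtreesThrough G u).card) :
    (subtreesThrough G v).card ≤ (subtreesThrough G x).card := by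
  induction q generalizing u with
  | nil => exact le_rfl
  | @cons x y v hxy r ih =>
    rw [Walk.cons_isPath_iff, Walk.support_cons, List.mem_cons, not_or] at hq
    have hconcave := card_subtreesThrough_add_card_subtreesThrough_le hG hux hxy
      (fun h => hq.2.2 (h ▸ r.start_mem_support))
    exact (ih hxy hq.1 (by omega)).trans (by omega)

theorem min_card_subtreesThrough_le (hG : G.IsAcyclic) {u v : V} {p : G.Walk u v}
    (hp : p.IsPath) {w : V} (hw : w ∈ p.support) :
    min (subtreesThrough G u).card (subtreesThrough G v).card ≤
      (subtreesThrough G w).card := by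
  induction p with
  | nil =>
    rw [Walk.support_nil, List.mem_singleton] at hw
    exact hw ▸ min_le_left _ _
  | @cons u x v hux q ih =>
    have hq : q.IsPath := (Walk.cons_isPath_iff hux q).1 hp |>.1
    have hx : min (subtreesThrough G u).card (subtreesThrough G v).card ≤
        (subtreesThrough G x).card := by
      by_cases hux_le : (subtreesThrough G u).card ≤ (subtreesThrough G x).card
      · exact (min_le_left _ _).trans hux_le
      · exact (min_le_right _ _).trans
          (card_subtreesThrough_le_of_lt hG hux q hp (not_le.1 hux_le))
    rcases List.mem_cons.1 (Walk.support_cons hux q ▸ hw) with rfl | hw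
    · exact min_le_left _ _
    · exact (le_min hx (min_le_right _ _)).trans (ih hq hw)

end SimpleGraph

/-- Along any path in a tree `T`, the function `v ↦ σ_v(T)` counting subtrees through
`v` is unimodal: its minimum over the path is attained at an endpoint. Consequently,
for any threshold `c`, the set of vertices `v` with `σ_v(T) ≥ c` induces a connected
(possibly empty) subgraph of `T`. -/
theorem stmt17 {V : Type*} [Fintype V] (G : SimpleGraph V) (hG : G.IsTree) :
    (∀ (u v : V) (p : G.Walk u v), p.IsPath → ∀ w ∈ p.support,
      min (subtreesThrough G u).card (subtreesThrough G v).card ≤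
        (subtreesThrough G w).card) ∧
    (∀ c : ℕ, (G.induce {v : V | c ≤ (subtreesThrough G v).card}).Preconnected) := by
  refine ⟨fun u v p hp w hw => SimpleGraph.min_card_subtreesThrough_le hG.isAcyclic hp hw, ?_⟩
  rintro c ⟨a, ha⟩ ⟨b, hb⟩
  obtain ⟨p, hp, -⟩ := hG.existsUnique_path a b
  exact ⟨p.induce _ fun w hw =>
    (le_min ha hb).trans (SimpleGraph.min_card_subtreesThrough_le hG.isAcyclic hp hw)⟩
end
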